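/- arXiv:0710.3757 — 5 statements merged into one kernel-verified Lean document; each statement's English description precedes it below -/
import Mathlib

section
/- For every k ≥ 0, the time series {X_{λ_k + n}}_{n∈ℤ}, obtained by re-centering the process at the stopping time λ_k, has the same distribution as the original process {X_n}_{n∈ℤ}. -/
open MeasureTheory Filter Topology

noncomputable section

/-- Index of the dyadic cell of level `k` containing `x`:
`x ∈ [i 2^{-k}, (i+1) 2^{-k})` iff `qcell k x = i`. -/
def qcell (k : ℕ) (x : ℝ) : ℤ := ⌊x * 2 ^ k⌋

/-- The dyadic cell of level `k` containing `x`, as a subset of `ℝ`. -/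
def dcell (k : ℕ) (x : ℝ) : Set ℝ :=
  Set.Ico ((qcell k x : ℝ) / 2 ^ k) (((qcell k x : ℝ) + 1) / 2 ^ k)

variable {Ω : Type*}

/-- The stopping times `λ_n`. -/
def lam (X : ℤ → Ω → ℝ) : ℕ → Ω → ℕ
  | 0 => fun _ => 0
  | n + 1 => fun ω =>
      lam X n ω +
        sInf {t : ℕ | 0 < t ∧ ∀ i : ℕ, i ≤ lam X n ω →
          qcell (n + 1) (X ((t : ℤ) + (i : ℤ)) ω) = qcell (n + 1) (X (i : ℤ) ω)}

/-- Almost surely every matching set is nonempty, i.e. all stopping times are finite. -/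
def LamFinite [MeasurableSpace Ω] (μ : Measure Ω) (X : ℤ → Ω → ℝ) : Prop :=
  ∀ᵐ ω ∂μ, ∀ n : ℕ,
    {t : ℕ | 0 < t ∧ ∀ i : ℕ, i ≤ lam X n ω →
      qcell (n + 1) (X ((t : ℤ) + (i : ℤ)) ω) = qcell (n + 1) (X (i : ℤ) ω)}.Nonempty

/-- Stationarity of a two-sided real valued process. -/
def IsStationaryProc [MeasurableSpace Ω] (μ : Measure Ω) (X : ℤ → Ω → ℝ) : Prop :=
  ∀ k : ℤ, μ.map (fun ω => fun i : ℤ => X (i + k) ω) = μ.map (fun ω => fun i : ℤ => X i ω)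

/-- The estimator `m_n`. -/
def mEst (X : ℤ → Ω → ℝ) (f : ℕ → ℤ → ℝ) (n : ℕ) (ω : Ω) : ℝ :=
  (n : ℝ)⁻¹ * ∑ j ∈ Finset.range n, f j (qcell j (X ((lam X j ω : ℤ) + 1) ω))

/-- The value following the stopping time `λ_n`. -/
def Xnext (X : ℤ → Ω → ℝ) (n : ℕ) (ω : Ω) : ℝ := X ((lam X n ω : ℤ) + 1) ω

/-- The σ-algebra generated by the quantized data segment `[X_0^{λ_n}]^n`. -/
def quantField [MeasurableSpace Ω] (X : ℤ → Ω → ℝ) (n : ℕ) : MeasurableSpace Ω :=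
  MeasurableSpace.comap
    (fun ω => ((lam X n ω, fun i : ℕ => qcell n (X ((min i (lam X n ω) : ℕ) : ℤ) ω)) : ℕ × (ℕ → ℤ)))
    inferInstance

/-- The σ-algebra generated by the data segment `X_0^{λ_n}`. -/
def segField [MeasurableSpace Ω] (X : ℤ → Ω → ℝ) (n : ℕ) : MeasurableSpace Ω :=
  MeasurableSpace.comap
    (fun ω => ((lam X n ω, fun i : ℕ => X ((min i (lam X n ω) : ℕ) : ℤ) ω) : ℕ × (ℕ → ℝ)))
    inferInstance

/-- `tildeX X n ω` is `tilde X_{-n}(ω) = lim_j X_{λ_j - n}(ω)`. -/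
def tildeX (X : ℤ → Ω → ℝ) (n : ℕ) (ω : Ω) : ℝ :=
  limUnder atTop fun j : ℕ => X ((lam X j ω : ℤ) - (n : ℤ)) ω

end
open Function

noncomputable section

/-!
On path space `ℤ → ℝ` the law `ν` of the process is invariant under every shift, and `λ_k`
becomes a function `pathLam k` of the path. Re-centring at a random time `τ` preserves a
shift-invariant law as soon as almost every path `y` arises by re-centring from at most one of
its backward shifts, i.e. `τ (shiftPath (-m) y) = m` for at most one `m`. Indeed, splitting
according to the value of `τ` and using shift invariance,
`ν {y | shiftPath (τ y) y ∈ B} ≤ ∑ₘ ν ({τ ∘ shiftPath (-m) = m} ∩ B) ≤ ν B`, and a probability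
measure lying below another one equals it.

For `τ = λ_k` this uniqueness holds by induction on `k`. Write `λ_{k+1} = λ_k + τ_k`, where
`τ_k` is the first return time of the block `[X_0^{λ_k}]^{k+1}`. If two shifts `m < m'` both
re-centre to `y`, then by induction they have the same `λ_k = a`, and the block seen from `m`
is a return for `m'` at time `m' - m < m' - a = τ_k`, contradicting the minimality of `τ_k`.
-/

lemma qcell_eq_of_qcell_succ_eq {k : ℕ} {x x' : ℝ} (h : qcell (k + 1) x = qcell (k + 1) x') :
    qcell k x = qcell k x' := by
  have coarsen : ∀ x : ℝ, qcell k x = qcell (k + 1) x / (2 : ℕ) := fun x => by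
    rw [qcell, qcell, ← Int.floor_div_natCast, pow_succ]
    push_cast
    ring_nf
  rw [coarsen, coarsen, h]

lemma Nat.sInf_eq_sInf_of_mem_iff {s t : Set ℕ} (hs : s.Nonempty)
    (h : ∀ n ≤ sInf s, n ∈ t ↔ n ∈ s) : sInf t = sInf s := by
  have ht : sInf s ∈ t := (h _ le_rfl).2 (Nat.sInf_mem hs)
  refine le_antisymm (Nat.sInf_le ht) (Nat.sInf_le ((h _ (Nat.sInf_le ht)).1 ?_))
  exact Nat.sInf_mem ⟨_, ht⟩

lemma measurable_sInf_setOf {β : Type*} [MeasurableSpace β] {p : ℕ → β → Prop}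
    (hp : ∀ n, Measurable (p n)) : Measurable fun y => sInf {n | p n y} := by
  refine measurable_to_countable' fun n => ?_
  have hpre : (fun y => sInf {n | p n y}) ⁻¹' {n} =
      {y | p n y ∧ (∀ m < n, ¬ p m y) ∨ (∀ m, ¬ p m y) ∧ n = 0} := by
    ext y
    simp only [Set.mem_preimage, Set.mem_singleton_iff, Set.mem_ofPred_eq]
    constructor
    · rintro rfl
      by_cases hne : ∃ m, p m y
      · exact .inl ⟨Nat.sInf_mem hne, fun m hm => Nat.notMem_of_lt_sInf hm⟩
      · push Not at hne
        simp [hne]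
    · rintro (⟨hn, hmin⟩ | ⟨hnone, rfl⟩)
      · refine le_antisymm (Nat.sInf_le hn) (not_lt.1 fun hlt => hmin _ hlt ?_)
        exact Nat.sInf_mem (s := {n | p n y}) ⟨n, hn⟩
      · simp [hnone]
  rw [hpre]
  exact Measurable.setOf (by fun_prop)

def shiftPath {α : Type*} (c : ℤ) (y : ℤ → α) : ℤ → α := fun n => y (n + c)

section shiftPath

variable {α : Type*}

@[simp]
lemma shiftPath_apply (c : ℤ) (y : ℤ → α) (n : ℤ) : shiftPath c y n = y (n + c) := rfl

@[simp]
lemma shiftPath_shiftPath (a b : ℤ) (y : ℤ → α) :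
    shiftPath a (shiftPath b y) = shiftPath (a + b) y := by
  funext n
  simp [add_assoc]

@[simp]
lemma shiftPath_zero (y : ℤ → α) : shiftPath 0 y = y := by
  funext n
  simp

variable [MeasurableSpace α]

@[fun_prop]
lemma measurable_shiftPath (c : ℤ) : Measurable (shiftPath (α := α) c) :=
  measurable_pi_lambda _ fun _ => measurable_pi_apply _

lemma measurable_shiftPath_comp {τ : (ℤ → α) → ℕ} (hτ : Measurable τ) :
    Measurable fun y => shiftPath (τ y) y :=
  (measurable_from_prod_countable_right (f := fun p : ℕ × (ℤ → α) => shiftPath p.1 p.2)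
    fun m => measurable_shiftPath m).comp (hτ.prodMk measurable_id)

theorem map_shiftPath_eq_of_ae_unique {ν : Measure (ℤ → α)} [IsProbabilityMeasure ν]
    (hν : ∀ c, MeasurePreserving (shiftPath c) ν ν) {τ : (ℤ → α) → ℕ} (hτ : Measurable τ)
    (huniq : ∀ᵐ y ∂ν, ∀ m m' : ℕ,
      τ (shiftPath (-m) y) = m → τ (shiftPath (-m') y) = m' → m = m') :
    ν.map (fun y => shiftPath (τ y) y) = ν := by
  have hG := measurable_shiftPath_comp hτ
  have : IsProbabilityMeasure (ν.map fun y => shiftPath (τ y) y) :=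
    Measure.isProbabilityMeasure_map hG.aemeasurable
  refine Measure.eq_of_le_of_isProbabilityMeasure (Measure.le_intro fun B hB _ => ?_)
  set F : ℕ → Set (ℤ → α) := fun m => {y | τ (shiftPath (-m) y) = m} ∩ B
  have hF : ∀ m, MeasurableSet (F m) := fun m =>
    ((hτ.comp (measurable_shiftPath _)) (measurableSet_singleton m)).inter hB
  have hdisj : Pairwise (AEDisjoint ν on F) := by
    refine fun m m' hne => measure_mono_null ?_ (ae_iff.1 huniq)
    rintro y ⟨hy, hy'⟩ hy_uniq
    exact hne (hy_uniq m m' hy.1 hy'.1)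
  calc ν.map (fun y => shiftPath (τ y) y) B
      = ν (⋃ m : ℕ, shiftPath m ⁻¹' F m) := by
        rw [Measure.map_apply hG hB]
        congr 1
        ext y
        simp [F]
    _ ≤ ∑' m : ℕ, ν (shiftPath m ⁻¹' F m) := measure_iUnion_le _
    _ = ∑' m, ν (F m) := by
        simp_rw [(hν _).measure_preimage (hF _).nullMeasurableSet]
    _ = ν (⋃ m, F m) := (measure_iUnion₀ hdisj fun m => (hF m).nullMeasurableSet).symm
    _ ≤ ν B := measure_mono (Set.iUnion_subset fun _ => Set.inter_subset_right)

end shiftPath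

def pathLam (k : ℕ) (y : ℤ → ℝ) : ℕ := lam (fun i y => y i) k y

/-- The return times `t > 0` with `[y_t^{t+λ_k}]^{k+1} = [y_0^{λ_k}]^{k+1}`; their least element
is `λ_{k+1} - λ_k`. -/
def matchSet (k : ℕ) (y : ℤ → ℝ) : Set ℕ :=
  {t | 0 < t ∧ ∀ i : ℕ, i ≤ pathLam k y → qcell (k + 1) (y (t + i)) = qcell (k + 1) (y i)}

def PathLamFinite (y : ℤ → ℝ) : Prop := ∀ k, (matchSet k y).Nonempty

lemma pathLam_zero (y : ℤ → ℝ) : pathLam 0 y = 0 := rfl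

lemma pathLam_succ (k : ℕ) (y : ℤ → ℝ) :
    pathLam (k + 1) y = pathLam k y + sInf (matchSet k y) := rfl

lemma lam_eq_pathLam {Ω : Type*} (X : ℤ → Ω → ℝ) (k : ℕ) (ω : Ω) :
    lam X k ω = pathLam k (fun i => X i ω) := by
  induction k with
  | zero => rfl
  | succ k ih => rw [pathLam_succ, matchSet, ← ih]; rfl

lemma pathLam_congr {k : ℕ} {z w : ℤ → ℝ} (hz : ∀ j < k, (matchSet j z).Nonempty)
    (h : ∀ i : ℕ, i ≤ pathLam k z → qcell k (w i) = qcell k (z i)) :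
    pathLam k w = pathLam k z := by
  induction k with
  | zero => rfl
  | succ k ih =>
    have hle : pathLam k z ≤ pathLam (k + 1) z := Nat.le_add_right _ _
    have hk : pathLam k w = pathLam k z := ih (fun j hj => hz j (by omega))
      fun i hi => qcell_eq_of_qcell_succ_eq (h i (hi.trans hle))
    have hmatch : ∀ t ≤ sInf (matchSet k z), t ∈ matchSet k w ↔ t ∈ matchSet k z := by
      intro t ht
      simp only [matchSet, Set.mem_ofPred_eq, hk]
      refine and_congr_right fun _ => forall₂_congr fun i hi => ?_
      have hti := h (t + i) (by rw [pathLam_succ]; omega)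
      push_cast at hti
      rw [hti, h i (hi.trans hle)]
    rw [pathLam_succ, pathLam_succ, hk, Nat.sInf_eq_sInf_of_mem_iff (hz k (by omega)) hmatch]

lemma lamFinite_iff_ae_pathLamFinite {Ω : Type*} [MeasurableSpace Ω] (μ : Measure Ω)
    (X : ℤ → Ω → ℝ) :
    LamFinite μ X ↔ ∀ᵐ ω ∂μ, PathLamFinite fun i => X i ω := by
  simp only [LamFinite, PathLamFinite, matchSet, lam_eq_pathLam]

lemma pathLam_shiftPath_of_pathLam_succ {k m a : ℕ} {y : ℤ → ℝ}
    (hz : PathLamFinite (shiftPath (-m) y)) (hm : pathLam (k + 1) (shiftPath (-m) y) = m)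
    (ha : pathLam k (shiftPath (-m) y) = a) :
    a < m ∧ (∀ i : ℕ, i ≤ a →
      qcell (k + 1) (shiftPath (-a) y i) = qcell (k + 1) (shiftPath (-m) y i)) ∧
      pathLam k (shiftPath (-a) y) = a := by
  obtain ⟨hτ_pos, hτ_match⟩ := Nat.sInf_mem (hz k)
  rw [pathLam_succ, ha] at hm
  have hcells : ∀ i : ℕ, i ≤ a →
      qcell (k + 1) (shiftPath (-a) y i) = qcell (k + 1) (shiftPath (-m) y i) := by
    intro i hi
    rw [← hτ_match i (hi.trans_eq ha.symm), shiftPath_apply, shiftPath_apply]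
    congr 2
    omega
  refine ⟨by omega, hcells, ?_⟩
  rw [pathLam_congr (fun j _ => hz j)
    fun i hi => qcell_eq_of_qcell_succ_eq (hcells i (hi.trans_eq ha)), ha]

lemma eq_of_pathLam_shiftPath_eq {y : ℤ → ℝ} (hy : ∀ m : ℕ, PathLamFinite (shiftPath (-m) y))
    (k : ℕ) {m m' : ℕ} (hm : pathLam k (shiftPath (-m) y) = m)
    (hm' : pathLam k (shiftPath (-m') y) = m') : m = m' := by
  induction k generalizing m m' with
  | zero => rw [pathLam_zero] at hm hm'; omega
  | succ k ih =>
    wlog hle : m ≤ m' generalizing m m'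
    · exact (this hm' hm (by omega)).symm
    obtain ⟨ham, hcells, ha⟩ := pathLam_shiftPath_of_pathLam_succ (hy m) hm rfl
    obtain ⟨-, hcells', ha'⟩ := pathLam_shiftPath_of_pathLam_succ (hy m') hm' rfl
    have haa' := ih ha ha'
    by_contra hne
    -- seen from `m'`, the block at `m` is a return earlier than `λ_{k+1} - λ_k`
    have hmatch : m' - m ∈ matchSet k (shiftPath (-m') y) := by
      refine ⟨by omega, fun i hi => ?_⟩
      have hshift : shiftPath (-m') y ((m' - m : ℕ) + i) = shiftPath (-m) y i := by
        simp only [shiftPath_apply]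
        congr 1
        omega
      rw [hshift, ← hcells i (by omega), ← hcells' i hi, haa']
    have hτ := Nat.sInf_le hmatch
    rw [pathLam_succ] at hm'
    omega

@[fun_prop]
lemma measurable_qcell (k : ℕ) : Measurable (qcell k) :=
  (measurable_id.mul_const _).floor

lemma measurable_mem_matchSet {k : ℕ} (hk : Measurable (pathLam k)) (t : ℕ) :
    Measurable fun y => t ∈ matchSet k y := by
  simp only [matchSet, Set.mem_ofPred_eq]
  have hle : ∀ i : ℕ, Measurable fun y => i ≤ pathLam k y := fun i =>
    measurableSet_setOfPred.1 (measurableSet_le measurable_const hk)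
  fun_prop

lemma measurable_pathLam (k : ℕ) : Measurable (pathLam k) := by
  induction k with
  | zero => exact measurable_const
  | succ k ih =>
    simp only [funext (pathLam_succ k)]
    exact ih.add (measurable_sInf_setOf (measurable_mem_matchSet ih))

lemma measurableSet_pathLamFinite : MeasurableSet {y | PathLamFinite y} :=
  Measurable.setOf (Measurable.forall fun k =>
    Measurable.exists (measurable_mem_matchSet (measurable_pathLam k)))

/-- For every `k ≥ 0`, the time series `{X_{λ_k + n}}_{n ∈ ℤ}`, obtained
by re-centering the process at the stopping time `λ_k`, has the same distribution as the
original process `{X_n}_{n ∈ ℤ}`. -/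
theorem stmt7 {Ω : Type*} [MeasurableSpace Ω] (μ : Measure Ω) [IsProbabilityMeasure μ]
    (X : ℤ → Ω → ℝ) (hmeas : ∀ i, Measurable (X i))
    (hstat : IsStationaryProc μ X)
    (hfin : LamFinite μ X) :
    ∀ k : ℕ,
      μ.map (fun ω => fun n : ℤ => X ((lam X k ω : ℤ) + n) ω) =
      μ.map (fun ω => fun n : ℤ => X n ω) := by
  intro k
  set path : Ω → ℤ → ℝ := fun ω n => X n ω
  have hpath : Measurable path := measurable_pi_lambda _ hmeas
  have := Measure.isProbabilityMeasure_map (μ := μ) hpath.aemeasurable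
  have hshift (c : ℤ) : MeasurePreserving (shiftPath c) (μ.map path) (μ.map path) :=
    ⟨measurable_shiftPath c, by
      rw [Measure.map_map (measurable_shiftPath c) hpath]
      exact hstat c⟩
  have hfinite : ∀ᵐ y ∂μ.map path, PathLamFinite y :=
    (ae_map_iff hpath.aemeasurable measurableSet_pathLamFinite).2
      ((lamFinite_iff_ae_pathLamFinite μ X).1 hfin)
  have huniq : ∀ᵐ y ∂μ.map path, ∀ m m' : ℕ, pathLam k (shiftPath (-m) y) = m →
      pathLam k (shiftPath (-m') y) = m' → m = m' := by
    have hshifts := ae_all_iff.2 fun m : ℕ => (hshift (-m)).quasiMeasurePreserving.ae hfinite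
    exact hshifts.mono fun y hy m m' => eq_of_pathLam_shiftPath_eq hy k
  have hrecentre : (fun ω n => X (lam X k ω + n) ω) =
      (fun y => shiftPath (pathLam k y) y) ∘ path := by
    funext ω n
    simp [path, lam_eq_pathLam, add_comm]
  rw [hrecentre, ← Measure.map_map (measurable_shiftPath_comp (measurable_pathLam k)) hpath]
  exact map_shiftPath_eq_of_ae_unique hshift (measurable_pathLam k) huniq

end
end

section
/- For every i ≥ 0, almost surely [tilde X_{-i}]^{j+1} = [X_{λ_j − i}]^{j+1} for all j ≥ i; that is, the limiting value tilde X_{-i} lies in the same cell of the dyadic partition P_{j+1} as X_{λ_j − i} for every j ≥ i. -/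
open MeasureTheory Filter Topology

/-!
For `j ≥ i` the values `X_{λ_j - i}` lie in nested dyadic cells: the block `X_0^{λ_j}` reappears
at level `j + 1` ending at `λ_{j+1}`. They therefore converge, and the limit can only leave the
half-open cell of level `j + 1` of `X_{λ_j - i}` through its right end point. In that case every
`X_{λ_k - i}`, `k ≥ j`, lies within `2^{-(k+1)}` to the left of a grid point of level `j + 1`.
By stationarity this is at most as likely as the same event for `X_{-i}`, whose probability
tends to `0` as `k → ∞`: shifting the path by `r` maps `{λ_k = r}` onto the event that the run
started at time `-r` has its `k`-th stopping time at `0`, and these events are disjoint in `r`.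
-/

namespace DyadicMatching

section

variable {k m : ℕ} {x x' : ℝ}

lemma qcell_eq_iff {c : ℤ} : qcell k x = c ↔ c / 2 ^ k ≤ x ∧ x < (c + 1) / 2 ^ k := by
  rw [qcell, Int.floor_eq_iff, div_le_iff₀ (by positivity), lt_div_iff₀ (by positivity)]

lemma qcell_div_le (k : ℕ) (x : ℝ) : (qcell k x : ℝ) / 2 ^ k ≤ x := (qcell_eq_iff.1 rfl).1

lemma lt_qcell_add_one_div (k : ℕ) (x : ℝ) : x < (qcell k x + 1) / 2 ^ k := (qcell_eq_iff.1 rfl).2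

lemma qcell_mono (k : ℕ) : Monotone (qcell k) := fun _ _ h => Int.floor_mono (by gcongr)

lemma measurable_qcell (k : ℕ) : Measurable (qcell k) := (measurable_id.mul_const _).floor

lemma qcell_eq_ediv (h : m ≤ k) (x : ℝ) : qcell m x = qcell k x / 2 ^ (k - m) := by
  have : x * 2 ^ m = x * 2 ^ k / ((2 ^ (k - m) : ℕ) : ℝ) := by
    rw [eq_div_iff (by positivity), mul_assoc, Nat.cast_pow, Nat.cast_ofNat, ← pow_add,
      Nat.add_sub_cancel' h]
  rw [qcell, this, Int.floor_div_natCast, qcell]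
  norm_cast

lemma qcell_eq_of_le (h : m ≤ k) (hx : qcell k x = qcell k x') : qcell m x = qcell m x' := by
  rw [qcell_eq_ediv h, hx, ← qcell_eq_ediv h]

lemma abs_sub_lt_of_qcell_eq (h : qcell k x = qcell k x') : |x - x'| < 1 / 2 ^ k := by
  have h1 := qcell_div_le k x
  have h2 := lt_qcell_add_one_div k x
  have h3 := qcell_div_le k x'
  have h4 := lt_qcell_add_one_div k x'
  rw [h] at h1 h2
  rw [add_div] at h2 h4
  rw [abs_sub_lt_iff]
  constructor <;> linarith

lemma mem_Icc_of_tendsto_of_qcell_eq {Y : ℕ → ℝ} {L : ℝ} {c : ℤ}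
    (hY : Tendsto Y atTop (𝓝 L)) (hc : ∀ᶠ m in atTop, qcell k (Y m) = c) :
    L ∈ Set.Icc ((c : ℝ) / 2 ^ k) ((c + 1) / 2 ^ k) :=
  isClosed_Icc.mem_of_tendsto hY <| hc.mono fun _ hm => Set.Ico_subset_Icc_self (qcell_eq_iff.1 hm)

/-- The points within `δ` to the left of a grid point of level `k` (for `δ ≥ 0`). -/
def cellExit (k : ℕ) (δ : ℝ) : Set ℝ := {x | qcell k x ≠ qcell k (x + δ)}

lemma measurableSet_cellExit (k : ℕ) (δ : ℝ) : MeasurableSet (cellExit k δ) :=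
  (measurableSet_eq_fun (measurable_qcell k)
    ((measurable_qcell k).comp (measurable_id.add_const δ))).compl

lemma cellExit_subset {δ δ' : ℝ} (hδ : 0 ≤ δ) (hδδ' : δ ≤ δ') : cellExit k δ ⊆ cellExit k δ' := by
  intro x hx hx'
  have h1 := qcell_mono k (le_add_of_nonneg_right hδ : x ≤ x + δ)
  have h2 := qcell_mono k (by linarith : x + δ ≤ x + δ')
  exact hx (le_antisymm h1 (hx' ▸ h2))

lemma iInter_cellExit_eq_empty {δ : ℕ → ℝ} (hδ0 : ∀ n, 0 ≤ δ n)
    (hδ : Tendsto δ atTop (𝓝 0)) : ⋂ n, cellExit k (δ n) = ∅ := by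
  refine Set.eq_empty_of_forall_notMem fun x hx => ?_
  have hgap : 0 < (qcell k x + 1) / 2 ^ k - x := sub_pos.2 (lt_qcell_add_one_div k x)
  obtain ⟨n, hn⟩ := (hδ.eventually (gt_mem_nhds hgap)).exists
  refine Set.mem_iInter.1 hx n (qcell_eq_iff.2 ⟨?_, ?_⟩).symm
  · linarith [qcell_div_le k x, hδ0 n]
  · linarith

end

lemma tendsto_one_div_two_pow_succ : Tendsto (fun n : ℕ => (1 : ℝ) / 2 ^ (n + 1)) atTop (𝓝 0) := by
  simp_rw [← one_div_pow]
  exact (tendsto_pow_atTop_nhds_zero_of_lt_one (by norm_num) (by norm_num)).comp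
    (tendsto_add_atTop_nat 1)

def IsDyadicNested (i : ℕ) (Y : ℕ → ℝ) : Prop :=
  ∀ k, i ≤ k → qcell (k + 1) (Y (k + 1)) = qcell (k + 1) (Y k)

namespace IsDyadicNested

variable {i j k m : ℕ} {Y : ℕ → ℝ}

lemma qcell_eq (hY : IsDyadicNested i Y) (hik : i ≤ k) (hkm : k ≤ m) :
    qcell (k + 1) (Y m) = qcell (k + 1) (Y k) := by
  induction m, hkm using Nat.le_induction with
  | base => rfl
  | succ m hkm ih => rw [qcell_eq_of_le (by omega) (hY m (hik.trans hkm)), ih]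

lemma cauchySeq (hY : IsDyadicNested i Y) : CauchySeq Y := by
  refine Metric.cauchySeq_iff'.2 fun ε hε => ?_
  obtain ⟨N, hN⟩ := eventually_atTop.1 (tendsto_one_div_two_pow_succ.eventually (gt_mem_nhds hε))
  refine ⟨max N i, fun n hn => ?_⟩
  rw [Real.dist_eq]
  exact (abs_sub_lt_of_qcell_eq (hY.qcell_eq (le_max_right N i) hn)).trans
    (hN _ (le_max_left N i))

lemma mem_cellExit {L : ℝ} (hY : IsDyadicNested i Y) (hlim : Tendsto Y atTop (𝓝 L))
    (hij : i ≤ j) (hne : qcell (j + 1) L ≠ qcell (j + 1) (Y j)) (hjk : j ≤ k) :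
    Y k ∈ cellExit (j + 1) (1 / 2 ^ (k + 1)) := by
  have hcell : ∀ n, i ≤ n →
      L ∈ Set.Icc ((qcell (n + 1) (Y n) : ℝ) / 2 ^ (n + 1))
        ((qcell (n + 1) (Y n) + 1) / 2 ^ (n + 1)) :=
    fun n hin => mem_Icc_of_tendsto_of_qcell_eq hlim
      (eventually_atTop.2 ⟨n, fun m hm => hY.qcell_eq hin hm⟩)
  have hL : L = (qcell (j + 1) (Y j) + 1) / 2 ^ (j + 1) :=
    (hcell j hij).2.eq_or_lt.resolve_right fun hlt => hne (qcell_eq_iff.2 ⟨(hcell j hij).1, hlt⟩)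
  have hqL : qcell (j + 1) L = qcell (j + 1) (Y j) + 1 := by
    refine qcell_eq_iff.2 ⟨by rw [hL]; push_cast; rfl, ?_⟩
    rw [hL]; push_cast
    gcongr; linarith
  have hLk : L ≤ Y k + 1 / 2 ^ (k + 1) := by
    have := qcell_div_le (k + 1) (Y k)
    have := (hcell k (hij.trans hjk)).2
    rw [add_div] at this
    linarith
  intro heq
  have := qcell_mono (j + 1) hLk
  rw [hqL, ← heq, hY.qcell_eq hij hjk] at this
  omega

end IsDyadicNested

section

def shift (r : ℤ) (y : ℤ → ℝ) : ℤ → ℝ := fun s => y (s - r)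

def matchSet (y : ℤ → ℝ) (n L : ℕ) : Set ℕ :=
  {t | 0 < t ∧ ∀ i : ℕ, i ≤ L → qcell (n + 1) (y ((t : ℤ) + (i : ℤ))) = qcell (n + 1) (y (i : ℤ))}

/-- The stopping times `λ_n` of the coordinate process on path space. -/
noncomputable def pathLam (y : ℤ → ℝ) (n : ℕ) : ℕ := lam (fun s (y : ℤ → ℝ) => y s) n y

/-- Excludes the junk value `sInf ∅ = 0` from the first `k` steps of `λ`. -/
def StagesFinite (y : ℤ → ℝ) (k : ℕ) : Prop := ∀ m < k, (matchSet y m (pathLam y m)).Nonempty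

variable {y z : ℤ → ℝ} {k m : ℕ}

lemma pathLam_succ (y : ℤ → ℝ) (n : ℕ) :
    pathLam y (n + 1) = pathLam y n + sInf (matchSet y n (pathLam y n)) := rfl

lemma lam_eq_pathLam {Ω : Type*} (X : ℤ → Ω → ℝ) (ω : Ω) (n : ℕ) :
    lam X n ω = pathLam (fun s => X s ω) n := by
  induction n with
  | zero => rfl
  | succ n ih => exact congrArg₂ (· + sInf ·) ih (by rw [ih]; rfl)

lemma pathLam_mono (y : ℤ → ℝ) : Monotone (pathLam y) :=
  monotone_nat_of_le_succ fun _ => Nat.le_add_right _ _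

lemma StagesFinite.mono (hy : StagesFinite y k) (hmk : m ≤ k) : StagesFinite y m :=
  fun n hn => hy n (hn.trans_le hmk)

lemma StagesFinite.sInf_mem (hy : StagesFinite y k) (hmk : m < k) :
    sInf (matchSet y m (pathLam y m)) ∈ matchSet y m (pathLam y m) :=
  Nat.sInf_mem (hy m hmk)

lemma StagesFinite.le_pathLam (hy : StagesFinite y k) : k ≤ pathLam y k := by
  induction k with
  | zero => exact le_rfl
  | succ k ih =>
    rw [pathLam_succ]
    have := ih (hy.mono k.le_succ)
    have := (hy.sInf_mem k.lt_succ_self).1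
    omega

lemma sInf_eq_of_forall_le_mem_iff {A B : Set ℕ} {a : ℕ} (ha : a ∈ A)
    (hAB : ∀ t ≤ a, t ∈ A ↔ t ∈ B) : sInf B = sInf A := by
  have hA : sInf A ≤ a := Nat.sInf_le ha
  have hAB' : sInf A ∈ B := (hAB _ hA).1 (Nat.sInf_mem ⟨a, ha⟩)
  have hB : sInf B ≤ sInf A := Nat.sInf_le hAB'
  exact hB.antisymm (Nat.sInf_le ((hAB _ (hB.trans hA)).2 (Nat.sInf_mem ⟨_, hAB'⟩)))

lemma pathLam_eq_of_qcell_eq (hy : StagesFinite y k)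
    (hyz : ∀ i : ℕ, i ≤ pathLam y k → qcell k (z i) = qcell k (y i)) :
    (∀ m ≤ k, pathLam z m = pathLam y m) ∧ StagesFinite z k := by
  have hmatch : ∀ m < k, ∀ t, t + pathLam y m ≤ pathLam y k →
      (t ∈ matchSet y m (pathLam y m) ↔ t ∈ matchSet z m (pathLam y m)) := by
    intro m hmk t ht
    have hq : ∀ i : ℕ, i ≤ pathLam y k → qcell (m + 1) (z i) = qcell (m + 1) (y i) :=
      fun i hi => qcell_eq_of_le hmk (hyz i hi)
    refine and_congr_right fun _ => forall₂_congr fun i hi => ?_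
    rw [← hq i (by omega), ← Nat.cast_add, ← hq (t + i) (by omega)]
  have hle : ∀ m < k, sInf (matchSet y m (pathLam y m)) + pathLam y m ≤ pathLam y k :=
    fun m hmk => by rw [add_comm, ← pathLam_succ]; exact pathLam_mono y hmk
  have hsInf : ∀ m < k, sInf (matchSet z m (pathLam y m)) = sInf (matchSet y m (pathLam y m)) :=
    fun m hmk => sInf_eq_of_forall_le_mem_iff (hy.sInf_mem hmk)
      fun t ht => hmatch m hmk t (by have := hle m hmk; omega)
  have hlam : ∀ m ≤ k, pathLam z m = pathLam y m := by
    intro m hmk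
    induction m with
    | zero => rfl
    | succ m ih => rw [pathLam_succ, pathLam_succ, ih (by omega), hsInf m hmk]
  refine ⟨hlam, fun m hmk => ?_⟩
  rw [hlam m hmk.le]
  exact ⟨_, (hmatch m hmk _ (hle m hmk)).1 (hy.sInf_mem hmk)⟩

end

section

variable {y : ℤ → ℝ} {k : ℕ} {r r' : ℕ}

lemma shift_apply_add (r : ℤ) (y : ℤ → ℝ) (t i : ℤ) : shift r y (t + i) = shift (r - t) y i := by
  simp only [shift]; congr 1; ring

/-- The run of `y` started at time `-r` has its `k`-th stopping time at time `0`. -/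
def RunsToZero (y : ℤ → ℝ) (k r : ℕ) : Prop :=
  StagesFinite (shift r y) k ∧ pathLam (shift r y) k = r

lemma RunsToZero.eq_add (h : RunsToZero y (k + 1) r) :
    r = pathLam (shift r y) k + sInf (matchSet (shift r y) k (pathLam (shift r y) k)) :=
  h.2.symm.trans (pathLam_succ _ _)

/-- The block matched in the last step ends at time `0`, so it is the block of length `λ_k`
started at time `-λ_k`. -/
lemma RunsToZero.qcell_shift_eq (h : RunsToZero y (k + 1) r) {i : ℕ}
    (hi : i ≤ pathLam (shift r y) k) :
    qcell (k + 1) (shift (pathLam (shift r y) k) y i) = qcell (k + 1) (shift r y i) := by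
  have hr := h.eq_add
  rw [← (h.1.sInf_mem k.lt_succ_self).2 i hi, shift_apply_add]
  congr 3
  omega

lemma RunsToZero.pred (h : RunsToZero y (k + 1) r) : RunsToZero y k (pathLam (shift r y) k) := by
  have := pathLam_eq_of_qcell_eq (h.1.mono k.le_succ)
    fun i hi => qcell_eq_of_le k.le_succ (h.qcell_shift_eq hi)
  exact ⟨this.2, this.1 k le_rfl⟩

lemma RunsToZero.pathLam_lt (h : RunsToZero y (k + 1) r) : pathLam (shift r y) k < r := by
  have := (h.1.sInf_mem k.lt_succ_self).1
  have := h.eq_add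
  omega

/-- By induction the two runs have the same `(k-1)`-st stopping time, and then the later start
would give the other run an earlier match. -/
lemma RunsToZero.unique (h : RunsToZero y k r) (h' : RunsToZero y k r') : r = r' := by
  induction k generalizing r r' with
  | zero => rw [← h.2, ← h'.2]; rfl
  | succ k ih =>
    wlog hlt : r' < r generalizing r r'
    · rcases (not_lt.1 hlt).eq_or_lt with heq | hlt'
      · exact heq
      · exact (this h' h hlt').symm
    have hs : pathLam (shift r y) k = pathLam (shift r' y) k := ih h.pred h'.pred
    have hs' : pathLam (shift r' y) k < r' := h'.pathLam_lt
    have hmem : r - r' ∈ matchSet (shift r y) k (pathLam (shift r y) k) := by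
      refine ⟨by omega, fun i hi => ?_⟩
      have hshift : shift r y (((r - r' : ℕ) : ℤ) + i) = shift r' y i := by
        rw [shift_apply_add]; congr 1; push_cast [hlt.le]; ring
      rw [hshift, ← h.qcell_shift_eq hi, hs, h'.qcell_shift_eq (hs ▸ hi)]
    have hmin := Nat.sInf_le hmem
    have hr := h.eq_add
    omega

end

section

variable {y : ℤ → ℝ} {i k : ℕ}

lemma StagesFinite.qcell_pathLam_succ_sub (h : StagesFinite y (k + 1)) (hik : i ≤ k) :
    qcell (k + 1) (y (pathLam y (k + 1) - i)) = qcell (k + 1) (y (pathLam y k - i)) := by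
  have hmatch := (h.sInf_mem k.lt_succ_self).2 (pathLam y k - i) (Nat.sub_le _ _)
  have hk := (h.mono k.le_succ).le_pathLam
  have e1 : ((pathLam y (k + 1) : ℕ) : ℤ) - i =
      (sInf (matchSet y k (pathLam y k)) : ℕ) + ((pathLam y k - i : ℕ) : ℤ) := by
    rw [pathLam_succ]; omega
  have e2 : ((pathLam y k : ℕ) : ℤ) - i = ((pathLam y k - i : ℕ) : ℤ) := by omega
  rw [e1, e2]
  exact hmatch

lemma isDyadicNested_pathLam_sub (h : ∀ n, StagesFinite y n) (i : ℕ) :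
    IsDyadicNested i fun m => y (pathLam y m - i) :=
  fun k hik => (h (k + 1)).qcell_pathLam_succ_sub hik

end

lemma measurable_sInf_of_measurable_mem {α : Type*} [MeasurableSpace α] {A : α → Set ℕ}
    (hA : ∀ t, Measurable fun a => t ∈ A a) : Measurable fun a => sInf (A a) := by
  refine measurable_to_countable' fun w => ?_
  have hfiber : (fun a => sInf (A a)) ⁻¹' {w} =
      {a | (w ∈ A a ∧ ∀ u, u < w → u ∉ A a) ∨ (w = 0 ∧ ∀ u, u ∉ A a)} := by
    ext a
    simp only [Set.mem_preimage, Set.mem_singleton_iff, Set.mem_ofPred_eq]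
    constructor
    · rintro rfl
      by_cases hne : (A a).Nonempty
      · exact .inl ⟨Nat.sInf_mem hne, fun u hu => Nat.notMem_of_lt_sInf hu⟩
      · rw [Set.not_nonempty_iff_eq_empty] at hne
        simp [hne]
    · rintro (⟨hw, hmin⟩ | ⟨rfl, hempty⟩)
      · exact IsLeast.csInf_eq ⟨hw, fun u hu => not_lt.1 fun hlt => hmin u hlt hu⟩
      · rw [Set.eq_empty_of_forall_notMem hempty, Nat.sInf_empty]
  rw [hfiber]
  exact measurableSet_setOfPred.2 <|
    ((hA w).and <| Measurable.forall fun u => measurable_const.imp (hA u).not).or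
      (measurable_const.and <| Measurable.forall fun u => (hA u).not)

lemma measurable_mem_matchSet {f : (ℤ → ℝ) → ℕ} (hf : Measurable f) (n t : ℕ) :
    Measurable fun y => t ∈ matchSet y n (f y) :=
  measurable_const.and <| Measurable.forall fun _ =>
    (measurableSet_setOfPred.1 (hf measurableSet_Ici)).imp <|
      ((measurable_qcell _).comp (measurable_pi_apply _)).eq
        ((measurable_qcell _).comp (measurable_pi_apply _))

lemma measurable_pathLam (n : ℕ) : Measurable fun y => pathLam y n := by
  induction n with
  | zero => exact measurable_const
  | succ n ih =>
    simp_rw [pathLam_succ]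
    exact ih.add (measurable_sInf_of_measurable_mem (measurable_mem_matchSet ih n))

lemma measurable_stagesFinite (k : ℕ) : Measurable fun y => StagesFinite y k :=
  Measurable.forall fun m => measurable_const.imp <|
    Measurable.exists fun t => measurable_mem_matchSet (measurable_pathLam m) m t

lemma measurable_shift (r : ℤ) : Measurable (shift r) :=
  measurable_pi_lambda _ fun _ => measurable_pi_apply _

section

variable {Ω : Type*} [MeasurableSpace Ω] {μ : Measure Ω} {X : ℤ → Ω → ℝ}

lemma _root_.IsStationaryProc.measure_preimage_shift (hstat : IsStationaryProc μ X)
    (hmeas : ∀ i, Measurable (X i)) (r : ℤ) {A : Set (ℤ → ℝ)} (hA : MeasurableSet A) :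
    μ ((fun ω s => X s ω) ⁻¹' (shift r ⁻¹' A)) = μ ((fun ω s => X s ω) ⁻¹' A) := by
  have hB := measurable_shift r hA
  calc μ ((fun ω s => X s ω) ⁻¹' (shift r ⁻¹' A))
      = μ.map (fun ω s => X s ω) (shift r ⁻¹' A) :=
        (Measure.map_apply (measurable_pi_lambda _ hmeas) hB).symm
    _ = μ.map (fun ω s => X (s + r) ω) (shift r ⁻¹' A) := by rw [hstat r]
    _ = μ ((fun ω s => X (s + r) ω) ⁻¹' (shift r ⁻¹' A)) :=
        Measure.map_apply (measurable_pi_lambda _ fun _ => hmeas _) hB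
    _ = μ ((fun ω s => X s ω) ⁻¹' A) := by
        have hshift : ∀ ω, shift r (fun s => X (s + r) ω) = fun s => X s ω :=
          fun ω => funext fun s => by simp [shift]
        simp only [Set.preimage_preimage, hshift]

lemma _root_.IsStationaryProc.measure_pathLam_sub_mem_le (hstat : IsStationaryProc μ X)
    (hmeas : ∀ i, Measurable (X i)) (k i : ℕ) {S : Set ℝ} (hS : MeasurableSet S) :
    μ {ω | StagesFinite (fun s => X s ω) k ∧
        X (pathLam (fun s => X s ω) k - i) ω ∈ S} ≤ μ (X (-i) ⁻¹' S) := by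
  set P : Ω → ℤ → ℝ := fun ω s => X s ω
  set U : ℕ → Set (ℤ → ℝ) := fun r => {y | StagesFinite y k ∧ pathLam y k = r ∧ y (r - i) ∈ S}
  have hU : ∀ r, MeasurableSet (U r) := fun r =>
    (measurableSet_setOfPred.2 (measurable_stagesFinite k)).inter <|
      (measurable_pathLam k (measurableSet_singleton r)).inter (measurable_pi_apply _ hS)
  have hdisj : Pairwise (Function.onFun Disjoint fun r : ℕ => P ⁻¹' (shift r ⁻¹' U r)) :=
    fun r r' hrr' => Set.disjoint_left.2 fun _ h h' =>
      hrr' (RunsToZero.unique ⟨h.1, h.2.1⟩ ⟨h'.1, h'.2.1⟩)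
  calc μ {ω | StagesFinite (P ω) k ∧ X (pathLam (P ω) k - i) ω ∈ S}
      ≤ μ (⋃ r, P ⁻¹' U r) :=
        measure_mono fun ω h => Set.mem_iUnion.2 ⟨_, h.1, rfl, h.2⟩
    _ ≤ ∑' r, μ (P ⁻¹' U r) := measure_iUnion_le _
    _ = ∑' r : ℕ, μ (P ⁻¹' (shift r ⁻¹' U r)) :=
        tsum_congr fun r : ℕ => (hstat.measure_preimage_shift hmeas r (hU r)).symm
    _ = μ (⋃ r : ℕ, P ⁻¹' (shift r ⁻¹' U r)) :=
        (measure_iUnion hdisj fun r =>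
          measurable_pi_lambda _ hmeas (measurable_shift r (hU r))).symm
    _ ≤ μ (X (-i) ⁻¹' S) := by
        refine measure_mono (Set.iUnion_subset fun r ω h => ?_)
        simpa [shift] using h.2.2

lemma _root_.LamFinite.ae_stagesFinite (hfin : LamFinite μ X) :
    ∀ᵐ ω ∂μ, ∀ n, StagesFinite (fun s => X s ω) n :=
  hfin.mono fun ω h _ m _ => by rw [← lam_eq_pathLam]; exact h m

lemma _root_.IsStationaryProc.ae_qcell_tildeX_eq [IsFiniteMeasure μ] (hstat : IsStationaryProc μ X)
    (hmeas : ∀ i, Measurable (X i)) {i j : ℕ} (hij : i ≤ j) :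
    ∀ᵐ ω ∂μ, (∀ n, StagesFinite (fun s => X s ω) n) →
      qcell (j + 1) (tildeX X i ω) = qcell (j + 1) (X ((lam X j ω : ℤ) - (i : ℤ)) ω) := by
  set B := {ω | (∀ n, StagesFinite (fun s => X s ω) n) ∧
    qcell (j + 1) (tildeX X i ω) ≠ qcell (j + 1) (X ((lam X j ω : ℤ) - (i : ℤ)) ω)}
  set E : ℕ → Set Ω := fun k => X (-i) ⁻¹' cellExit (j + 1) (1 / 2 ^ (k + 1))
  have hB : ∀ k, j ≤ k → B ⊆ {ω | StagesFinite (fun s => X s ω) k ∧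
      X (pathLam (fun s => X s ω) k - i) ω ∈ cellExit (j + 1) (1 / 2 ^ (k + 1))} := by
    rintro k hjk ω ⟨hfin, hne⟩
    have hY := isDyadicNested_pathLam_sub hfin i
    simp only [tildeX, lam_eq_pathLam] at hne
    exact ⟨hfin k, hY.mem_cellExit hY.cauchySeq.tendsto_limUnder hij hne hjk⟩
  have hE : Tendsto (fun k => μ (E k)) atTop (𝓝 0) := by
    have hempty : ⋂ k, E k = ∅ := by
      rw [← Set.preimage_iInter, iInter_cellExit_eq_empty (fun _ => by positivity)
        tendsto_one_div_two_pow_succ, Set.preimage_empty]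
    have h := tendsto_measure_iInter_atTop (μ := μ) (s := E)
      (fun k => (hmeas _ (measurableSet_cellExit _ _)).nullMeasurableSet)
      (fun a b hab => Set.preimage_mono <| cellExit_subset (by positivity)
        (one_div_le_one_div_of_le (by positivity) (pow_le_pow_right₀ one_le_two (by omega))))
      ⟨0, measure_ne_top _ _⟩
    rwa [hempty, measure_empty] at h
  have hBE : ∀ k, j ≤ k → μ B ≤ μ (E k) := fun k hjk => (measure_mono (hB k hjk)).trans
    (hstat.measure_pathLam_sub_mem_le hmeas k i (measurableSet_cellExit _ _))
  have hnull : μ B = 0 := le_antisymm (ge_of_tendsto hE (eventually_atTop.2 ⟨j, hBE⟩)) zero_le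
  filter_upwards [measure_eq_zero_iff_ae_notMem.1 hnull] with ω hω hfin
  exact not_not.1 fun hne => hω ⟨hfin, hne⟩

end

end DyadicMatching

open DyadicMatching in
/-- For every `i ≥ 0`, almost surely
`[tilde X_{-i}]^{j+1} = [X_{λ_j − i}]^{j+1}` for all `j ≥ i`: the limiting value
`tilde X_{-i}` lies in the same cell of the dyadic partition `P_{j+1}` as `X_{λ_j − i}`
for every `j ≥ i`. -/
theorem stmt8 {Ω : Type*} [MeasurableSpace Ω] (μ : Measure Ω) [IsProbabilityMeasure μ]
    (X : ℤ → Ω → ℝ) (hmeas : ∀ i, Measurable (X i))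
    (hstat : IsStationaryProc μ X)
    (hfin : LamFinite μ X) :
    ∀ i : ℕ, ∀ᵐ ω ∂μ, ∀ j : ℕ, i ≤ j →
      qcell (j + 1) (tildeX X i ω) = qcell (j + 1) (X ((lam X j ω : ℤ) - (i : ℤ)) ω) := by
  intro i
  have hcells : ∀ j, ∀ᵐ ω ∂μ, i ≤ j → (∀ n, StagesFinite (fun s => X s ω) n) →
      qcell (j + 1) (tildeX X i ω) = qcell (j + 1) (X ((lam X j ω : ℤ) - (i : ℤ)) ω) := fun j =>
    if hij : i ≤ j then (hstat.ae_qcell_tildeX_eq hmeas hij).mono fun _ h _ => h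
    else .of_forall fun _ h => absurd h hij
  filter_upwards [hfin.ae_stagesFinite, ae_all_iff.2 hcells] with ω hω hcell j hij
  exact hcell j hij hω
end

section
/- The one-sided process {tilde X_n}_{n≤0} of limiting values along the stopping times has the same distribution as the one-sided original process {X_n}_{n≤0}. -/
open MeasureTheory Filter Topology

noncomputable section

variable {Ω : Type*}

/-- Stationarity of a two-sided real valued process. -/
def IsStationaryReal [MeasurableSpace Ω] (μ : Measure Ω) (X : ℤ → Ω → ℝ) : Prop :=
  ∀ k : ℤ, μ.map (fun ω => fun i : ℤ => X (i + k) ω) = μ.map (fun ω => fun i : ℤ => X i ω)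

end

/-!
Work on path space `ℤ → ℝ` under the law `ν` of `X`, which is shift invariant. The backward
window `(x_{λ_j - i})_{i ≥ 0}` read at the stopping time `λ_j` has the same law as the window
`(x_{-i})_{i ≥ 0}` read at time `0`: on `{λ_j = t}` shift the path by `-t`; the event becomes
"`λ_j`, computed from time `-t`, ends at time `0`". These events are a.s. disjoint in `t`,
because stopping times started at different times never meet, and their total mass is `1`.
As `j → ∞` the windows at `λ_j` converge a.s. to `tilde X`, since for `j' ≥ j` the window at
`λ_{j'}` lies in the same level-`j` dyadic cells as the window at `λ_j`; an a.s. limit of random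
variables with a common law has that law.
-/

lemma qcell_eq_ediv_pow {m k : ℕ} (hmk : m ≤ k) (x : ℝ) :
    qcell m x = qcell k x / 2 ^ (k - m) := by
  have h : x * 2 ^ m = x * 2 ^ k / ((2 ^ (k - m) : ℕ) : ℝ) := by
    rw [← pow_sub_mul_pow (2 : ℝ) hmk]
    push_cast
    field_simp
  unfold qcell
  rw [h, Int.floor_div_natCast]
  push_cast
  rfl

lemma qcell_eq_of_le {m k : ℕ} (hmk : m ≤ k) {x y : ℝ} (h : qcell k x = qcell k y) :
    qcell m x = qcell m y := by
  rw [qcell_eq_ediv_pow hmk, qcell_eq_ediv_pow hmk y, h]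

lemma abs_sub_lt_of_qcell_eq {k : ℕ} {x y : ℝ} (h : qcell k x = qcell k y) :
    |x - y| < (2 ^ k)⁻¹ := by
  have hpow : (0 : ℝ) < 2 ^ k := by positivity
  have h1 : |x * 2 ^ k - y * 2 ^ k| < 1 := Int.abs_sub_lt_one_of_floor_eq_floor h
  rw [← sub_mul, abs_mul, abs_of_pos hpow] at h1
  rwa [← lt_div_iff₀ hpow, one_div] at h1

lemma Nat.sInf_eq_of_forall_le_mem_iff {A B : Set ℕ} (hA : A.Nonempty)
    (h : ∀ t ≤ sInf A, t ∈ B ↔ t ∈ A) : sInf B = sInf A := by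
  have hB : sInf A ∈ B := (h _ le_rfl).2 (Nat.sInf_mem hA)
  have hle : sInf B ≤ sInf A := Nat.sInf_le hB
  exact le_antisymm hle (Nat.sInf_le ((h _ hle).1 (Nat.sInf_mem ⟨_, hB⟩)))

lemma Nat.sInf_eq_iff {T : Set ℕ} {m : ℕ} :
    sInf T = m ↔ (m ∈ T ∧ ∀ k < m, k ∉ T) ∨ (m = 0 ∧ ∀ k, k ∉ T) := by
  rcases T.eq_empty_or_nonempty with rfl | hT
  · simp [eq_comm]
  · have hT' : ¬ ∀ k, k ∉ T := fun h => hT.ne_empty (Set.eq_empty_iff_forall_notMem.2 h)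
    rw [csInf_eq_iff hT]
    simp only [hT', and_false, or_false]
    refine and_congr_right fun _ => ⟨fun h k hk hkT => (h k hkT).not_gt hk,
      fun h k hkT => not_lt.1 fun hk => h k hk hkT⟩

lemma measurable_natSInf {α : Type*} [MeasurableSpace α] {S : α → Set ℕ}
    (hS : ∀ t, MeasurableSet {a | t ∈ S a}) : Measurable fun a => sInf (S a) := by
  refine measurable_to_countable' fun m => ?_
  have hfiber : (fun a => sInf (S a)) ⁻¹' {m} =
      ({a | m ∈ S a} ∩ ⋂ k < m, {a | k ∈ S a}ᶜ) ∪ ({_a | m = 0} ∩ ⋂ k, {a | k ∈ S a}ᶜ) := by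
    ext a
    simp [Nat.sInf_eq_iff]
  rw [hfiber]
  exact ((hS m).inter (.biInter (Set.to_countable _) fun k _ => (hS k).compl)).union
    ((MeasurableSet.const _).inter (.iInter fun k => (hS k).compl))

lemma MeasureTheory.tsum_measure_inter_eq {α : Type*} [MeasurableSpace α] {ν : Measure α}
    [IsFiniteMeasure ν] {B : ℕ → Set α} (hB : ∀ t, MeasurableSet (B t))
    (hdisj : Pairwise (Function.onFun (AEDisjoint ν) B)) (hsum : ∑' t, ν (B t) = ν Set.univ)
    {C : Set α} (hC : MeasurableSet C) : ∑' t, ν (B t ∩ C) = ν C := by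
  have hconull : ν (⋃ t, B t)ᶜ = 0 := by
    rw [measure_compl (.iUnion hB) (measure_ne_top _ _),
      measure_iUnion₀ hdisj fun t => (hB t).nullMeasurableSet, hsum, tsub_self]
  rw [← measure_iUnion₀ (hdisj.mono fun _ _ h => h.mono Set.inter_subset_left Set.inter_subset_left)
    fun t => ((hB t).inter hC).nullMeasurableSet, ← Set.iUnion_inter, Set.inter_comm,
    measure_inter_conull hconull]

lemma MeasureTheory.map_eq_of_ae_tendsto {α E : Type*} [MeasurableSpace α] [TopologicalSpace E]
    [TopologicalSpace.PseudoMetrizableSpace E] [MeasurableSpace E] [BorelSpace E]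
    {ν : Measure α} [IsProbabilityMeasure ν] {f : ℕ → α → E} {g h : α → E}
    (hf : ∀ j, AEMeasurable (f j) ν) (hg : AEMeasurable g ν) (hh : AEMeasurable h ν)
    (hlim : ∀ᵐ a ∂ν, Tendsto (fun j => f j a) atTop (𝓝 (g a)))
    (hlaw : ∀ j, ν.map (f j) = ν.map h) : ν.map g = ν.map h :=
  tendstoInDistribution_unique f (tendstoInDistribution_of_ae_tendsto hf hg hlim)
    ⟨hf, hh, by simp_rw [hlaw]; exact tendsto_const_nhds⟩

namespace DyadicReturn

def coord (i : ℤ) (x : ℤ → ℝ) : ℝ := x i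

def shift (u : ℤ) (x : ℤ → ℝ) : ℤ → ℝ := fun i => x (i + u)

def window (t : ℤ) (x : ℤ → ℝ) : ℕ → ℝ := fun i => x (t - i)

def matchSet (j : ℕ) (x : ℤ → ℝ) : Set ℕ :=
  {t | 0 < t ∧ ∀ i : ℕ, i ≤ lam coord j x → qcell (j + 1) (x (t + i)) = qcell (j + 1) (x i)}

def Recurrent (x : ℤ → ℝ) : Prop := ∀ j, (matchSet j x).Nonempty

lemma lam_succ (j : ℕ) (x : ℤ → ℝ) :
    lam coord (j + 1) x = lam coord j x + sInf (matchSet j x) := rfl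

@[simp] lemma shift_zero (x : ℤ → ℝ) : shift 0 x = x := by
  funext i; simp [shift]

lemma shift_shift (u v : ℤ) (x : ℤ → ℝ) : shift u (shift v x) = shift (u + v) x := by
  funext i; simp [shift, add_assoc]

lemma window_shift (t s : ℤ) (x : ℤ → ℝ) : window t (shift s x) = window (t + s) x := by
  funext i; simp only [window, shift]; ring_nf

variable {x : ℤ → ℝ}

lemma Recurrent.sInf_mem (hx : Recurrent x) (j : ℕ) : sInf (matchSet j x) ∈ matchSet j x :=
  Nat.sInf_mem (hx j)

lemma Recurrent.le_lam (hx : Recurrent x) (j : ℕ) : j ≤ lam coord j x := by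
  induction j with
  | zero => exact le_rfl
  | succ j ih =>
    have := (hx.sInf_mem j).1
    rw [lam_succ]; omega

lemma mem_matchSet_congr {j t : ℕ} {w w' : ℤ → ℝ} (hlam : lam coord j w' = lam coord j w)
    (h : ∀ i : ℕ, i ≤ t + lam coord j w → qcell (j + 1) (w' i) = qcell (j + 1) (w i)) :
    t ∈ matchSet j w' ↔ t ∈ matchSet j w := by
  simp only [matchSet, Set.mem_ofPred_eq, hlam]
  refine and_congr_right fun _ => forall₂_congr fun i hi => ?_
  have hti := h (t + i) (by omega)
  push_cast at hti
  rw [hti, h i (by omega)]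

lemma lam_congr (j : ℕ) {w w' : ℤ → ℝ} (hw : Recurrent w)
    (h : ∀ i : ℕ, i ≤ lam coord j w → qcell j (w' i) = qcell j (w i)) :
    lam coord j w' = lam coord j w := by
  induction j with
  | zero => rfl
  | succ j ih =>
    have hlam : lam coord j w' = lam coord j w :=
      ih fun i hi => qcell_eq_of_le j.le_succ (h i (hi.trans (Nat.le_add_right _ _)))
    rw [lam_succ, lam_succ, hlam, Nat.sInf_eq_of_forall_le_mem_iff (hw j) fun t ht =>
      mem_matchSet_congr hlam fun i hi => h i (by rw [lam_succ]; omega)]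

/-- The stopping time `λ_j` started at time `u` ends at time `u + λ_j (shift u x)`. -/
lemma lam_shift_add_ne (hx : ∀ u : ℕ, Recurrent (shift u x)) (j : ℕ) {u : ℕ} (hu : 0 < u) :
    lam coord j (shift u x) + u ≠ lam coord j x := by
  induction j generalizing u with
  | zero => show 0 + u ≠ 0; omega
  | succ j ih =>
    have hx0 : Recurrent x := by simpa using hx 0
    obtain ⟨-, hr⟩ := hx0.sInf_mem j
    obtain ⟨hr'_pos, hr'⟩ := (hx u).sInf_mem j
    simp only [shift] at hr'
    rw [lam_succ, lam_succ]
    intro H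
    set L := lam coord j x
    set L' := lam coord j (shift u x)
    rcases le_or_gt L L' with hle | hlt
    · -- `x` itself would return at `u + L' - L`, before `sInf (matchSet j x)`
      have hv : u + L' - L ∈ matchSet j x := by
        refine ⟨by omega, fun i hi => ?_⟩
        have h1 := hr' (L' - L + i) (by omega)
        have h2 := hr i hi
        rw [show ((u + L' - L : ℕ) : ℤ) + i = ((L' - L + i : ℕ) : ℤ) + u by omega, ← h1,
          show ((sInf (matchSet j (shift u x)) : ℕ) : ℤ) + ((L' - L + i : ℕ) : ℤ) + u
            = ((sInf (matchSet j x) : ℕ) : ℤ) + i by omega, h2]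
      have := Nat.sInf_le hv
      omega
    · -- the stopping time started at `L - L'` would meet the one started at `0`
      have hp : lam coord j (shift (L - L' : ℕ) x) = L' := by
        refine lam_congr j (hx u) fun i hi => qcell_eq_of_le j.le_succ ?_
        have h1 := hr' i hi
        have h2 := hr (L - L' + i) (by omega)
        simp only [shift]
        rw [← h1, show ((sInf (matchSet j (shift u x)) : ℕ) : ℤ) + i + u
            = ((sInf (matchSet j x) : ℕ) : ℤ) + ((L - L' + i : ℕ) : ℤ) by omega, h2,
          show ((L - L' + i : ℕ) : ℤ) = i + ((L - L' : ℕ) : ℤ) by omega]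
      exact ih (u := L - L') (by omega) (by rw [hp]; omega)

lemma Recurrent.qcell_lam_sub (hx : Recurrent x) {n j j' : ℕ} (hnj : n ≤ j) (hjj' : j ≤ j') :
    qcell j (x (lam coord j' x - n)) = qcell j (x (lam coord j x - n)) := by
  induction j', hjj' using Nat.le_induction with
  | base => rfl
  | succ j' hjj' ih =>
    obtain ⟨-, hr⟩ := hx.sInf_mem j'
    have hn : n ≤ lam coord j' x := hnj.trans (hjj'.trans (hx.le_lam j'))
    have h := hr (lam coord j' x - n) (Nat.sub_le _ _)
    rw [show ((sInf (matchSet j' x) : ℕ) : ℤ) + ((lam coord j' x - n : ℕ) : ℤ)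
        = (lam coord (j' + 1) x : ℤ) - n by rw [lam_succ]; omega,
      show ((lam coord j' x - n : ℕ) : ℤ) = (lam coord j' x : ℤ) - n by omega] at h
    rw [← ih, qcell_eq_of_le (by omega) h]

lemma Recurrent.tendsto_window (hx : Recurrent x) (n : ℕ) :
    Tendsto (fun j => window (lam coord j x) x n) atTop (𝓝 (tildeX coord n x)) := by
  have hcauchy : CauchySeq fun j => window (lam coord j x) x n := by
    refine Metric.cauchySeq_iff'.2 fun ε hε => ?_
    obtain ⟨K, hK⟩ := exists_pow_lt_of_lt_one hε (by norm_num : (1 / 2 : ℝ) < 1)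
    refine ⟨max n K, fun m hm => ?_⟩
    calc dist _ _ < ((2 : ℝ) ^ max n K)⁻¹ :=
          abs_sub_lt_of_qcell_eq (hx.qcell_lam_sub (le_max_left n K) hm)
      _ ≤ (1 / 2) ^ K := by
          rw [one_div, inv_pow]
          exact inv_anti₀ (by positivity) (pow_le_pow_right₀ (by norm_num) (le_max_right n K))
      _ < ε := hK
  obtain ⟨l, hl⟩ := cauchySeq_tendsto_of_complete hcauchy
  have hlim : tildeX coord n x = l := hl.limUnder_eq
  rwa [hlim]

lemma measurableSet_mem_matchSet (j : ℕ) (hlam : Measurable (lam coord j)) (t : ℕ) :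
    MeasurableSet {x | t ∈ matchSet j x} := by
  have hset : {x | t ∈ matchSet j x} = {_x | 0 < t} ∩ ⋂ i : ℕ,
      ({x | lam coord j x < i} ∪ {x | qcell (j + 1) (x (t + i)) = qcell (j + 1) (x i)}) := by
    ext x
    simp only [matchSet, imp_iff_not_or, not_le, Set.mem_ofPred_eq, Set.mem_inter_iff,
      Set.mem_iInter, Set.mem_union]
  have hqcell : Measurable (qcell (j + 1)) := Int.measurable_floor.comp (measurable_id.mul_const _)
  rw [hset]
  exact (MeasurableSet.const _).inter <| .iInter fun i =>
    (hlam measurableSet_Iio).union <| measurableSet_eq_fun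
      (hqcell.comp (measurable_pi_apply _)) (hqcell.comp (measurable_pi_apply _))

lemma measurable_lam (j : ℕ) : Measurable (lam coord j) := by
  induction j with
  | zero => exact measurable_const
  | succ j ih => exact ih.add (measurable_natSInf (measurableSet_mem_matchSet j ih))

lemma measurableSet_recurrent : MeasurableSet {x | Recurrent x} := by
  have hset : {x | Recurrent x} = ⋂ j, ⋃ t, {x | t ∈ matchSet j x} := by
    ext x
    simp only [Recurrent, Set.Nonempty, Set.mem_ofPred_eq, Set.mem_iInter, Set.mem_iUnion]
  rw [hset]
  exact .iInter fun j => .iUnion (measurableSet_mem_matchSet j (measurable_lam j))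

lemma measurable_shift (u : ℤ) : Measurable (shift u) :=
  measurable_pi_lambda _ fun i => measurable_pi_apply (i + u)

lemma measurable_window (t : ℤ) : Measurable (window t) :=
  measurable_pi_lambda _ fun _ => measurable_pi_apply _

lemma measurable_window_lam (j : ℕ) : Measurable fun x => window (lam coord j x) x :=
  (measurable_from_prod_countable_left (f := fun p : (ℤ → ℝ) × ℕ => window p.2 p.1)
    fun t => measurable_window t).comp
    (measurable_id.prodMk (measurable_lam j))

/-- The paths on which `λ_j`, computed from time `-t`, ends at time `0`. -/
def arrivalSet (j t : ℕ) : Set (ℤ → ℝ) := {x | lam coord j (shift (-t) x) = t}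

lemma measurableSet_arrivalSet (j t : ℕ) : MeasurableSet (arrivalSet j t) :=
  measurable_shift _ (measurable_lam j (measurableSet_singleton t))

lemma eq_of_mem_arrivalSet (hx : ∀ k : ℤ, Recurrent (shift k x)) {j s t : ℕ}
    (hs : x ∈ arrivalSet j s) (ht : x ∈ arrivalSet j t) : s = t := by
  wlog hst : s ≤ t generalizing s t
  · exact (this ht hs (le_of_not_ge hst)).symm
  by_contra hne
  refine lam_shift_add_ne (x := shift (-t) x) (fun u => by rw [shift_shift]; exact hx _) j
    (u := t - s) (by omega) ?_
  rw [shift_shift, show ((t - s : ℕ) : ℤ) + -t = -s by omega]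
  simp only [arrivalSet, Set.mem_ofPred_eq] at hs ht
  omega

variable {ν : Measure (ℤ → ℝ)}

lemma measure_preimage_window_lam (hν : ∀ k, MeasurePreserving (shift k) ν ν) (j : ℕ)
    {A : Set (ℕ → ℝ)} (hA : MeasurableSet A) :
    ν ((fun x => window (lam coord j x) x) ⁻¹' A) = ∑' t, ν (arrivalSet j t ∩ window 0 ⁻¹' A) := by
  have hfiber : ∀ t : ℕ, MeasurableSet (lam coord j ⁻¹' {t} ∩ window t ⁻¹' A) := fun t =>
    (measurable_lam j (measurableSet_singleton t)).inter (measurable_window t hA)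
  calc ν ((fun x => window (lam coord j x) x) ⁻¹' A)
      = ν (⋃ t : ℕ, lam coord j ⁻¹' {t} ∩ window t ⁻¹' A) := by
        congr 1; ext x; simp
    _ = ∑' t : ℕ, ν (lam coord j ⁻¹' {t} ∩ window t ⁻¹' A) :=
        measure_iUnion (fun s t hst => ((pairwise_disjoint_fiber _ hst).mono
          Set.inter_subset_left Set.inter_subset_left)) hfiber
    _ = ∑' t, ν (arrivalSet j t ∩ window 0 ⁻¹' A) := tsum_congr fun t => by
        rw [← (hν (-t)).measure_preimage (hfiber t).nullMeasurableSet]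
        congr 1; ext x; simp [arrivalSet, window_shift]

lemma map_window_lam (hν : ∀ k, MeasurePreserving (shift k) ν ν) [IsFiniteMeasure ν]
    (hrec : ∀ᵐ x ∂ν, Recurrent x) (j : ℕ) :
    ν.map (fun x => window (lam coord j x) x) = ν.map (window 0) := by
  have hrec_shift : ∀ᵐ x ∂ν, ∀ k : ℤ, Recurrent (shift k x) :=
    ae_all_iff.2 fun k => (hν k).quasiMeasurePreserving.ae hrec
  have hdisj : Pairwise (Function.onFun (AEDisjoint ν) (arrivalSet j)) := fun s t hst =>
    measure_mono_null (fun x (hx : x ∈ arrivalSet j s ∩ arrivalSet j t) hxrec =>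
      hst (eq_of_mem_arrivalSet hxrec hx.1 hx.2)) (ae_iff.1 hrec_shift)
  ext A hA
  rw [Measure.map_apply (measurable_window_lam j) hA, Measure.map_apply (measurable_window 0) hA,
    measure_preimage_window_lam hν j hA]
  refine tsum_measure_inter_eq (measurableSet_arrivalSet j) hdisj ?_ (measurable_window 0 hA)
  simpa using (measure_preimage_window_lam hν j MeasurableSet.univ).symm

section Transfer

variable {Ω : Type*} (X : ℤ → Ω → ℝ)

lemma lam_eq_lam_coord (ω : Ω) (j : ℕ) : lam X j ω = lam coord j (fun i => X i ω) := by
  induction j with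
  | zero => rfl
  | succ j ih => simp only [lam, ih]; rfl

lemma tildeX_eq_tildeX_coord (ω : Ω) (n : ℕ) : tildeX X n ω = tildeX coord n (fun i => X i ω) := by
  unfold tildeX
  congr 1
  funext j
  rw [lam_eq_lam_coord X ω j]
  rfl

lemma ae_recurrent_of_lamFinite [MeasurableSpace Ω] {μ : Measure Ω} (hfin : LamFinite μ X) :
    ∀ᵐ ω ∂μ, Recurrent (fun i => X i ω) :=
  hfin.mono fun ω h n => by
    have hn := h n
    rwa [lam_eq_lam_coord X ω n] at hn

end Transfer

end DyadicReturn

open DyadicReturn in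
/-- The one-sided process `{tilde X_n}_{n ≤ 0}` of limiting values along
the stopping times has the same distribution as the one-sided original process
`{X_n}_{n ≤ 0}` (indexing by `i : ℕ` the coordinate at time `-i`). -/
theorem stmt9 {Ω : Type*} [MeasurableSpace Ω] (μ : Measure Ω) [IsProbabilityMeasure μ]
    (X : ℤ → Ω → ℝ) (hmeas : ∀ i, Measurable (X i))
    (hstat : IsStationaryReal μ X)
    (hfin : LamFinite μ X) :
    μ.map (fun ω => fun i : ℕ => tildeX X i ω) =
    μ.map (fun ω => fun i : ℕ => X (-(i : ℤ)) ω) := by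
  set path : Ω → ℤ → ℝ := fun ω i => X i ω
  have hpath : Measurable path := measurable_pi_lambda _ hmeas
  have := Measure.isProbabilityMeasure_map (μ := μ) hpath.aemeasurable
  have hshift (k : ℤ) : MeasurePreserving (shift k) (μ.map path) (μ.map path) :=
    ⟨measurable_shift k, by rw [Measure.map_map (measurable_shift k) hpath]; exact hstat k⟩
  have hrec : ∀ᵐ x ∂μ.map path, Recurrent x :=
    (ae_map_iff hpath.aemeasurable measurableSet_recurrent).2
      (ae_recurrent_of_lamFinite X hfin)
  have hlim : ∀ᵐ x ∂μ.map path,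
      Tendsto (fun j => window (lam coord j x) x) atTop (𝓝 fun n => tildeX coord n x) :=
    hrec.mono fun x hx => tendsto_pi_nhds.2 hx.tendsto_window
  have hlimit := aemeasurable_of_tendsto_metrizable_ae atTop
    (fun j => (measurable_window_lam j).aemeasurable) hlim
  have hlaw := map_eq_of_ae_tendsto (fun j => (measurable_window_lam j).aemeasurable) hlimit
    (measurable_window 0).aemeasurable hlim (map_window_lam hshift hrec)
  have htilde : (fun ω i => tildeX X i ω) = (fun x n => tildeX coord n x) ∘ path := by
    funext ω i; exact tildeX_eq_tildeX_coord X ω i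
  have hzero : (fun ω (i : ℕ) => X (-(i : ℤ)) ω) = window 0 ∘ path := by
    funext ω i; simp [window, path]
  rw [htilde, hzero, ← hlimit.map_map_of_aemeasurable hpath.aemeasurable,
    ← Measure.map_map (measurable_window 0) hpath, hlaw]
end

section
/- Almost surely, for every n ≥ 0 the sequence (X_{λ_j − n})_{j≥n} converges as j → ∞; indeed, the intervals [X_{λ_j − n}]^j for j ≥ n form a nested sequence of dyadic intervals whose lengths 2^{-j} tend to zero, so tilde X_{-n} = lim_{j→∞} X_{λ_j − n} is well defined. -/
open MeasureTheory Filter Topology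

noncomputable section

variable {Ω : Type*}

/-- Stationarity of a two-sided real valued process. -/
def IsStationaryProcess [MeasurableSpace Ω] (μ : Measure Ω) (X : ℤ → Ω → ℝ) : Prop :=
  ∀ k : ℤ, μ.map (fun ω => fun i : ℤ => X (i + k) ω) = μ.map (fun ω => fun i : ℤ => X i ω)

end

noncomputable section

/- The defining property of `λ_{j+1}` at the index `i = λ_j - n` gives
`[X_{λ_{j+1} - n}]^{j+1} = [X_{λ_j - n}]^{j+1}` as soon as `λ_j ≥ n`, and `λ_j ≥ j` since every
increment is positive. Hence consecutive terms of `(X_{λ_j - n})_{j ≥ n}` lie in a common dyadic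
cell of level `j + 1`, the cells are nested, and the sequence is Cauchy with geometric rate. -/

lemma qcell_eq_qcell_succ_div_two (k : ℕ) (x : ℝ) : qcell k x = qcell (k + 1) x / 2 := by
  have h := Int.floor_div_natCast (x * 2 ^ (k + 1)) 2
  rw [Nat.cast_ofNat, show x * 2 ^ (k + 1) / 2 = x * 2 ^ k by ring] at h
  exact h

lemma mem_dcell_iff {k : ℕ} {x y : ℝ} : y ∈ dcell k x ↔ qcell k y = qcell k x := by
  have h2 : (0 : ℝ) < 2 ^ k := by positivity
  rw [dcell, Set.mem_Ico, div_le_iff₀ h2, lt_div_iff₀ h2, qcell, qcell, Int.floor_eq_iff, and_comm]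

lemma dcell_congr {k : ℕ} {x y : ℝ} (h : qcell k x = qcell k y) : dcell k x = dcell k y := by
  rw [dcell, dcell, h]

lemma dcell_succ_subset (k : ℕ) (x : ℝ) : dcell (k + 1) x ⊆ dcell k x := by
  intro y hy
  rw [mem_dcell_iff] at hy ⊢
  rw [qcell_eq_qcell_succ_div_two k y, qcell_eq_qcell_succ_div_two k x, hy]

lemma dist_lt_of_qcell_eq {k : ℕ} {x y : ℝ} (h : qcell k x = qcell k y) :
    dist x y < 1 / 2 ^ k := by
  have h2 : (0 : ℝ) < 2 ^ k := by positivity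
  have hscaled := Int.abs_sub_lt_one_of_floor_eq_floor h
  rw [← sub_mul, abs_mul, abs_of_pos h2] at hscaled
  rw [Real.dist_eq, lt_div_iff₀ h2]
  exact hscaled

lemma exists_tendsto_of_qcell_succ_eq {y : ℕ → ℝ} {n : ℕ}
    (h : ∀ j, n ≤ j → qcell (j + 1) (y (j + 1)) = qcell (j + 1) (y j)) :
    ∃ L, Tendsto y atTop (𝓝 L) := by
  have hdist : ∀ j, dist (y (j + n)) (y (j + 1 + n)) ≤ 1 / 2 / 2 ^ j := by
    intro j
    calc dist (y (j + n)) (y (j + 1 + n))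
        ≤ 1 / 2 ^ (j + n + 1) := by
          rw [dist_comm, show j + 1 + n = j + n + 1 by omega]
          exact (dist_lt_of_qcell_eq (h (j + n) (Nat.le_add_left n j))).le
      _ ≤ 1 / 2 ^ (j + 1) := by gcongr <;> norm_num
      _ = 1 / 2 / 2 ^ j := by ring
  obtain ⟨L, hL⟩ := cauchySeq_tendsto_of_complete (cauchySeq_of_le_geometric_two hdist)
  exact ⟨L, (tendsto_add_atTop_iff_nat n).mp hL⟩

section StoppingTimes

variable {Ω : Type*}

def matchTimes (X : ℤ → Ω → ℝ) (n : ℕ) (ω : Ω) : Set ℕ :=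
  {t : ℕ | 0 < t ∧ ∀ i : ℕ, i ≤ lam X n ω →
    qcell (n + 1) (X ((t : ℤ) + (i : ℤ)) ω) = qcell (n + 1) (X (i : ℤ) ω)}

lemma lam_succ (X : ℤ → Ω → ℝ) (n : ℕ) (ω : Ω) :
    lam X (n + 1) ω = lam X n ω + sInf (matchTimes X n ω) := rfl

lemma le_lam {X : ℤ → Ω → ℝ} {ω : Ω} (hne : ∀ n, (matchTimes X n ω).Nonempty) (n : ℕ) :
    n ≤ lam X n ω := by
  induction n with
  | zero => exact Nat.zero_le _
  | succ n ih =>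
    have hpos := (Nat.sInf_mem (hne n)).1
    rw [lam_succ]
    omega

lemma qcell_lam_succ_sub {X : ℤ → Ω → ℝ} {ω : Ω} {n m : ℕ} (hne : (matchTimes X n ω).Nonempty)
    (hm : m ≤ lam X n ω) :
    qcell (n + 1) (X ((lam X (n + 1) ω : ℤ) - m) ω) =
      qcell (n + 1) (X ((lam X n ω : ℤ) - m) ω) := by
  have hmatch := (Nat.sInf_mem hne).2 (lam X n ω - m) (Nat.sub_le _ _)
  have hindex : ((sInf (matchTimes X n ω) : ℕ) : ℤ) + ((lam X n ω - m : ℕ) : ℤ) =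
      (lam X (n + 1) ω : ℤ) - m := by
    rw [lam_succ]
    push_cast [hm]
    ring
  rwa [hindex, Nat.cast_sub hm] at hmatch

end StoppingTimes

theorem stmt10_general {Ω : Type*} [MeasurableSpace Ω] (μ : Measure Ω)
    (X : ℤ → Ω → ℝ)
    (hfin : LamFinite μ X) :
    ∀ᵐ ω ∂μ, ∀ n : ℕ,
      (∀ j : ℕ, n ≤ j →
        dcell (j + 1) (X ((lam X (j + 1) ω : ℤ) - (n : ℤ)) ω) ⊆
          dcell j (X ((lam X j ω : ℤ) - (n : ℤ)) ω)) ∧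
      ∃ L : ℝ, Tendsto (fun j : ℕ => X ((lam X j ω : ℤ) - (n : ℤ)) ω) atTop (𝓝 L) := by
  filter_upwards [hfin] with ω hne n
  have hstep : ∀ j, n ≤ j → qcell (j + 1) (X ((lam X (j + 1) ω : ℤ) - n) ω) =
      qcell (j + 1) (X ((lam X j ω : ℤ) - n) ω) := fun j hj =>
    qcell_lam_succ_sub (hne j) (hj.trans (le_lam hne j))
  refine ⟨fun j hj => ?_, exists_tendsto_of_qcell_succ_eq hstep⟩
  rw [dcell_congr (hstep j hj)]
  exact dcell_succ_subset j _

/-- Almost surely, for every `n ≥ 0` the dyadic cells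
`[X_{λ_j − n}]^j`, `j ≥ n`, are nested (each of length `2^{-j}` → 0), and the sequence
`(X_{λ_j − n})_{j ≥ n}` converges as `j → ∞`; in particular
`tilde X_{-n} = lim_j X_{λ_j − n}` is well defined. -/
theorem stmt10 {Ω : Type*} [MeasurableSpace Ω] (μ : Measure Ω) [IsProbabilityMeasure μ]
    (X : ℤ → Ω → ℝ) (hmeas : ∀ i, Measurable (X i))
    (hstat : IsStationaryProcess μ X)
    (hfin : LamFinite μ X) :
    ∀ᵐ ω ∂μ, ∀ n : ℕ,
      (∀ j : ℕ, n ≤ j →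
        dcell (j + 1) (X ((lam X (j + 1) ω : ℤ) - (n : ℤ)) ω) ⊆
          dcell j (X ((lam X j ω : ℤ) - (n : ℤ)) ω)) ∧
      ∃ L : ℝ, Tendsto (fun j : ℕ => X ((lam X j ω : ℤ) - (n : ℤ)) ω) atTop (𝓝 L) :=
  stmt10_general μ X hfin

end
end

section
/- For the counterexample process, if x_i ∈ A_i for i = 1, 2, …, j, then for every j ≥ 1: P( X_{λ_j} = x_j | X_0^1 = (0,1), X_{λ_m} = x_m for 1 ≤ m < j ) = P( X_1 = x_j | X_0 = 1, X_1 ∈ A_{j-1} ). -/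
open MeasureTheory Filter Topology

noncomputable section

/-- The transition matrix of the counterexample Markov chain on the nonnegative
integers. -/
def K (i j : ℕ) : ℝ :=
  if i = 0 then (if j = 0 ∨ j = 1 then 1 / 2 else 0)
  else if i = 1 then (if j = 0 then 1 / 2 else if 2 ≤ j then (2 : ℝ) ^ (-(j : ℤ)) else 0)
  else if j = 0 then 1 else 0

/-- The stationary distribution of the counterexample chain. -/
def piDist (i : ℕ) : ℝ :=
  if i = 0 then 4 / 7 else if i = 1 then 2 / 7 else (1 / 7) * (2 : ℝ) ^ (1 - (i : ℤ))

/-- `M` is (a two-sided stationary version of) the counterexample Markov chain: for every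
starting time `n`, the finite dimensional distributions are those of the stationary
Markov chain with transition matrix `K` and one-dimensional marginal `piDist`. -/
def IsCounterexampleChain {Ω : Type*} [MeasurableSpace Ω] (μ : Measure Ω)
    (M : ℤ → Ω → ℕ) : Prop :=
  (∀ n, Measurable (M n)) ∧
  ∀ (n : ℤ) (m : ℕ) (a : ℕ → ℕ),
    (μ {ω | ∀ k ≤ m, M (n + k) ω = a k}).toReal =
      piDist (a 0) * ∏ k ∈ Finset.range m, K (a k) (a (k + 1))

/-- The map `h`: `h 0 = 0`, `h 1 = 1`, `h i = 2^{-2^i}/2` for `i ≥ 2`. -/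
def hmap (i : ℕ) : ℝ :=
  if i = 0 then 0 else if i = 1 then 1 else (2 : ℝ) ^ (-(2 ^ i : ℤ)) / 2

/-- `A n = { h(i) : h(i) < 2^{-(n+1)} }`. -/
def A (n : ℕ) : Set ℝ := {x | (∃ i, hmap i = x) ∧ x < (2 : ℝ) ^ (-(n : ℤ) - 1)}

open ProbabilityTheory

/-!
On `X_0^1 = (0, 1)` the stopping times are rigid. Each `λ_m` is preceded by the symbol `1`, and
while `x_m ∈ A_m` for `m < j`, whether stage `j` ends at time `t` depends only on `M_0^{t-1}` and
on whether `M_t` lies in `S_j = cellZero j`, the states whose `h`-value lies in `[0, 2^{-j})`.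
So, up to the null set where some `λ_m` is infinite, the conditioning event is the disjoint
union, over the possible words `l = M_0^{λ_j - 1}` (all ending in `1`), of
`{M_0^{|l|-1} = l, M_{|l|} ∈ S_j}`, and `X_{λ_j} = h(k)` cuts out `{M_0^{|l|-1} = l, M_{|l|} = k}`.
By the Markov property every piece contributes the factor `K(1, ·)`, so `M_{λ_j}` has the law
`K(1, ·)` conditioned on `S_j`: the law of `M_1` given `M_0 = 1`, `M_1 ∈ S_j`, and `X_1 ∈ A_{j-1}`
is exactly `M_1 ∈ S_j`. The same decomposition shows, by induction on `j`, that the conditioning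
event has positive probability.
-/

lemma qcell_eq_zero_iff {k : ℕ} {y : ℝ} (hy : 0 ≤ y) : qcell k y = 0 ↔ y < 2 ^ (-(k : ℤ)) := by
  rw [qcell, Int.floor_eq_zero_iff, Set.mem_Ico, zpow_neg, zpow_natCast, ← one_div,
    lt_div_iff₀ (by positivity)]
  exact and_iff_right (by positivity)

lemma qcell_one (k : ℕ) : qcell k 1 = 2 ^ k := by
  rw [qcell, one_mul]
  exact_mod_cast Int.floor_natCast (2 ^ k)

lemma qcell_lt_of_lt_one {k : ℕ} {y : ℝ} (hy : y < 1) : qcell k y < 2 ^ k := by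
  rw [qcell, Int.floor_lt]
  push_cast
  nlinarith [pow_pos (two_pos : (0 : ℝ) < 2) k]

lemma hmap_of_two_le {a : ℕ} (ha : 2 ≤ a) : hmap a = 2 ^ (-(2 ^ a : ℤ)) / 2 := by
  rw [hmap, if_neg (by omega), if_neg (by omega)]

lemma hmap_pos_of_two_le {a : ℕ} (ha : 2 ≤ a) : 0 < hmap a := by
  rw [hmap_of_two_le ha]; positivity

lemma hmap_lt_half_of_two_le {a : ℕ} (ha : 2 ≤ a) : hmap a < 1 / 2 := by
  rw [hmap_of_two_le ha]
  have : (2 : ℝ) ^ (-(2 ^ a : ℤ)) < 1 := zpow_lt_one_of_neg₀ one_lt_two (by simp)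
  linarith

lemma hmap_lt_hmap {a b : ℕ} (ha : 2 ≤ a) (hab : a < b) : hmap b < hmap a := by
  rw [hmap_of_two_le ha, hmap_of_two_le (ha.trans hab.le)]
  have : (2 : ℤ) ^ a < 2 ^ b := pow_lt_pow_right₀ one_lt_two hab
  gcongr
  exact one_lt_two

lemma hmap_injective : Function.Injective hmap := by
  have hne : ∀ a b, a < b → hmap a ≠ hmap b := by
    intro a b hab
    obtain rfl | hb : b = 1 ∨ 2 ≤ b := by omega
    · obtain rfl : a = 0 := by omega
      norm_num [hmap]
    · have hpos := hmap_pos_of_two_le hb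
      have hhalf := hmap_lt_half_of_two_le hb
      obtain rfl | rfl | ha : a = 0 ∨ a = 1 ∨ 2 ≤ a := by omega
      · rw [show hmap 0 = 0 by simp [hmap]]; exact hpos.ne
      · rw [show hmap 1 = 1 by simp [hmap]]; linarith
      · exact (hmap_lt_hmap ha hab).ne'
  intro a b h
  by_contra hab
  rcases Nat.lt_or_gt_of_ne hab with hlt | hlt
  · exact hne a b hlt h
  · exact hne b a hlt h.symm

lemma hmap_eq_zero_iff {a : ℕ} : hmap a = 0 ↔ a = 0 :=
  hmap_injective.eq_iff' (by simp [hmap])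

lemma hmap_eq_one_iff {a : ℕ} : hmap a = 1 ↔ a = 1 :=
  hmap_injective.eq_iff' (by simp [hmap])

lemma hmap_eq_one_or_lt_half (a : ℕ) : hmap a = 1 ∨ (0 ≤ hmap a ∧ hmap a < 1 / 2) := by
  obtain rfl | rfl | ha : a = 0 ∨ a = 1 ∨ 2 ≤ a := by omega
  · norm_num [hmap]
  · simp [hmap]
  · exact Or.inr ⟨(hmap_pos_of_two_le ha).le, hmap_lt_half_of_two_le ha⟩

lemma hmap_nonneg (a : ℕ) : 0 ≤ hmap a := by
  unfold hmap; split_ifs <;> positivity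

def cellZero (k : ℕ) : Set ℕ := {a | qcell k (hmap a) = 0}

lemma zero_mem_cellZero (k : ℕ) : 0 ∈ cellZero k := by
  simp [cellZero, hmap, qcell]

lemma one_notMem_cellZero (k : ℕ) : 1 ∉ cellZero k := by
  simp [cellZero, hmap, qcell_one]

lemma cellZero_succ_subset (k : ℕ) : cellZero (k + 1) ⊆ cellZero k := by
  intro a ha
  simp only [cellZero, Set.mem_ofPred_eq, qcell_eq_zero_iff (hmap_nonneg a)] at ha ⊢
  exact ha.trans_le (zpow_le_zpow_right₀ one_le_two (by push_cast; omega))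

lemma A_eq_image (n : ℕ) : A n = hmap '' cellZero (n + 1) := by
  have hcell : ∀ a, a ∈ cellZero (n + 1) ↔ hmap a < 2 ^ (-(n : ℤ) - 1) := fun a => by
    rw [cellZero, Set.mem_ofPred_eq, qcell_eq_zero_iff (hmap_nonneg a), Nat.cast_succ, neg_add']
  ext x
  simp only [A, Set.mem_ofPred_eq, Set.mem_image, hcell]
  exact ⟨fun ⟨⟨a, ha⟩, hx⟩ => ⟨a, ha ▸ hx, ha⟩, fun ⟨a, ha, hax⟩ => ⟨⟨a, hax⟩, hax ▸ ha⟩⟩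

lemma qcell_succ_eq_zero_of_mem_A {m : ℕ} {z : ℝ} (hz : z ∈ A m) : qcell (m + 1) z = 0 := by
  obtain ⟨a, ha, rfl⟩ := A_eq_image m ▸ hz
  exact ha

def matchShifts (y : ℕ → ℝ) (ℓ k : ℕ) : Set ℕ :=
  {t | 0 < t ∧ ∀ i ≤ ℓ, qcell k (y (t + i)) = qcell k (y i)}

def lamSeq (y : ℕ → ℝ) : ℕ → ℕ
  | 0 => 0
  | n + 1 => lamSeq y n + sInf (matchShifts y (lamSeq y n) (n + 1))

def StagesFinite (y : ℕ → ℝ) (n : ℕ) : Prop :=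
  ∀ m < n, (matchShifts y (lamSeq y m) (m + 1)).Nonempty

def HasHistory (x : ℕ → ℝ) (n : ℕ) (y : ℕ → ℝ) : Prop :=
  y 0 = 0 ∧ y 1 = 1 ∧ ∀ m, 1 ≤ m → m < n → y (lamSeq y m) = x m

lemma sInf_eq_of_forall_le_mem_iff {s s' : Set ℕ} (hs : s.Nonempty)
    (h : ∀ t ≤ sInf s, t ∈ s' ↔ t ∈ s) : sInf s' = sInf s := by
  have hmem : sInf s ∈ s' := (h _ le_rfl).2 (Nat.sInf_mem hs)
  refine le_antisymm (Nat.sInf_le hmem) (not_lt.1 fun hlt => ?_)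
  exact Nat.notMem_of_lt_sInf hlt ((h _ hlt.le).1 (Nat.sInf_mem ⟨_, hmem⟩))

section Sequence

variable {y y' : ℕ → ℝ} {x : ℕ → ℝ} {n m : ℕ}

lemma lamSeq_mono (y : ℕ → ℝ) : Monotone (lamSeq y) :=
  monotone_nat_of_le_succ fun _ => Nat.le_add_right _ _

lemma lamSeq_lt_succ (h : (matchShifts y (lamSeq y m) (m + 1)).Nonempty) :
    lamSeq y m < lamSeq y (m + 1) :=
  Nat.lt_add_of_pos_right (Nat.sInf_mem h).1

lemma lamSeq_lt_lamSeq (h : StagesFinite y n) {a b : ℕ} (hab : a < b) (hbn : b ≤ n) :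
    lamSeq y a < lamSeq y b :=
  (lamSeq_lt_succ (h a (by omega))).trans_le (lamSeq_mono y hab)

lemma lamSeq_succ_eq_of_qcell_eq (hne : (matchShifts y (lamSeq y m) (m + 1)).Nonempty)
    (hm : lamSeq y' m = lamSeq y m)
    (hcell : ∀ i ≤ lamSeq y (m + 1), qcell (m + 1) (y' i) = qcell (m + 1) (y i)) :
    lamSeq y' (m + 1) = lamSeq y (m + 1) ∧
      (matchShifts y' (lamSeq y' m) (m + 1)).Nonempty := by
  have hsucc : lamSeq y (m + 1) = lamSeq y m + sInf (matchShifts y (lamSeq y m) (m + 1)) := rfl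
  have hiff : ∀ t ≤ sInf (matchShifts y (lamSeq y m) (m + 1)),
      t ∈ matchShifts y' (lamSeq y m) (m + 1) ↔ t ∈ matchShifts y (lamSeq y m) (m + 1) := by
    intro t ht
    refine and_congr_right fun _ => forall₂_congr fun i hi => ?_
    rw [hcell (t + i) (by omega), hcell i (by omega)]
  have hsInf := sInf_eq_of_forall_le_mem_iff hne hiff
  refine ⟨?_, hm ▸ ⟨_, (hiff _ le_rfl).2 (Nat.sInf_mem hne)⟩⟩
  show lamSeq y' m + sInf (matchShifts y' (lamSeq y' m) (m + 1)) = _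
  rw [hm, hsInf, hsucc]

lemma lamSeq_eq_of_eqOn (hfin : StagesFinite y n) (hag : ∀ i < lamSeq y n, y' i = y i)
    (hc : qcell n (y' (lamSeq y n)) = qcell n (y (lamSeq y n))) :
    ∀ m ≤ n, lamSeq y' m = lamSeq y m ∧ StagesFinite y' m := by
  intro m
  induction m with
  | zero => exact fun _ => ⟨rfl, fun _ h => absurd h (Nat.not_lt_zero _)⟩
  | succ m ih =>
    intro hmn
    obtain ⟨hm, hfin'⟩ := ih (by omega)
    have hcell : ∀ i ≤ lamSeq y (m + 1), qcell (m + 1) (y' i) = qcell (m + 1) (y i) := by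
      intro i hi
      rcases (hi.trans (lamSeq_mono y hmn)).lt_or_eq with hlt | heq
      · rw [hag i hlt]
      · -- `i = λ_n`, reached by stage `m + 1` only if `m + 1 = n`
        obtain rfl : m + 1 = n := by
          by_contra hne
          have := lamSeq_lt_lamSeq hfin (show m + 1 < n by omega) le_rfl
          omega
        rw [heq, hc]
    obtain ⟨hsucc, hne⟩ := lamSeq_succ_eq_of_qcell_eq (hfin m (by omega)) hm hcell
    refine ⟨hsucc, fun k hk => ?_⟩
    rcases Nat.lt_succ_iff_lt_or_eq.1 hk with hk | rfl
    exacts [hfin' k hk, hne]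

lemma hasHistory_one : HasHistory x 1 y ↔ y 0 = 0 ∧ y 1 = 1 :=
  and_congr_right fun _ => and_iff_left fun m h1 h2 => absurd h2 (by omega)

lemma hasHistory_succ (hn : 1 ≤ n) :
    HasHistory x (n + 1) y ↔ HasHistory x n y ∧ y (lamSeq y n) = x n := by
  refine ⟨fun ⟨h0, h1, h⟩ => ⟨⟨h0, h1, fun m hm1 hm2 => h m hm1 (by omega)⟩, h n hn (by omega)⟩,
    fun ⟨⟨h0, h1, h⟩, hn'⟩ => ⟨h0, h1, fun m hm1 hm2 => ?_⟩⟩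
  rcases Nat.lt_succ_iff_lt_or_eq.1 hm2 with hm | rfl
  exacts [h m hm1 hm, hn']

section Structure

variable (hy : ∀ i, y i = 1 ∨ (0 ≤ y i ∧ y i < 1 / 2))
include hy

lemma eq_one_of_qcell_eq_pow {k i : ℕ} (h : qcell k (y i) = 2 ^ k) : y i = 1 :=
  (hy i).resolve_right fun ⟨_, hlt⟩ => (qcell_lt_of_lt_one (by linarith)).ne h

lemma lamSeq_one_spec (h0 : y 0 = 0) (h1 : y 1 = 1) (hne : (matchShifts y 0 1).Nonempty) :
    2 ≤ lamSeq y 1 ∧ y (lamSeq y 1 - 1) = 1 ∧ qcell 1 (y (lamSeq y 1)) = 0 := by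
  have hlam : lamSeq y 1 = sInf (matchShifts y 0 1) := zero_add _
  rw [hlam]
  obtain ⟨htpos, ht⟩ := Nat.sInf_mem hne
  have hq : qcell 1 (y (sInf (matchShifts y 0 1))) = 0 := by
    simpa [h0, qcell] using ht 0 le_rfl
  have ht1 : sInf (matchShifts y 0 1) ≠ 1 := fun h => by
    rw [h, h1, qcell_one] at hq; norm_num at hq
  refine ⟨by omega, (hy _).resolve_right fun ⟨hnn, hlt⟩ => ?_, hq⟩
  -- otherwise the earlier shift `λ_1 - 1` would already match `y 0 = 0` at level 1
  refine Nat.notMem_of_lt_sInf (s := matchShifts y 0 1)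
    (m := sInf (matchShifts y 0 1) - 1) (by omega) ⟨by omega, fun i hi => ?_⟩
  obtain rfl : i = 0 := by omega
  rw [add_zero, h0, (qcell_eq_zero_iff hnn).2 (by norm_num; linarith)]
  simp [qcell]

lemma lamSeq_succ_spec (hne : (matchShifts y (lamSeq y m) (m + 1)).Nonempty)
    (h2 : 2 ≤ lamSeq y m) (h1 : y (lamSeq y m - 1) = 1)
    (hq : qcell (m + 1) (y (lamSeq y m)) = 0) :
    2 ≤ lamSeq y (m + 1) ∧ y (lamSeq y (m + 1) - 1) = 1 ∧
      qcell (m + 1) (y (lamSeq y (m + 1))) = 0 := by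
  have hsucc : lamSeq y (m + 1) = lamSeq y m + sInf (matchShifts y (lamSeq y m) (m + 1)) := rfl
  obtain ⟨htpos, ht⟩ := Nat.sInf_mem hne
  refine ⟨by omega, eq_one_of_qcell_eq_pow hy (k := m + 1) ?_, ?_⟩
  · have := ht (lamSeq y m - 1) (by omega)
    rwa [h1, qcell_one, show sInf (matchShifts y (lamSeq y m) (m + 1)) + (lamSeq y m - 1) =
      lamSeq y (m + 1) - 1 by omega] at this
  · have := ht (lamSeq y m) le_rfl
    rwa [hq, ← Nat.add_comm (lamSeq y m), ← hsucc] at this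

lemma lamSeq_spec (hx : ∀ m, 1 ≤ m → m < n → qcell (m + 1) (x m) = 0)
    (hist : HasHistory x n y) (hfin : StagesFinite y n) (hm1 : 1 ≤ m) (hmn : m ≤ n) :
    2 ≤ lamSeq y m ∧ y (lamSeq y m - 1) = 1 ∧ qcell m (y (lamSeq y m)) = 0 := by
  induction m, hm1 using Nat.le_induction with
  | base => exact lamSeq_one_spec hy hist.1 hist.2.1 (hfin 0 (by omega))
  | succ m hm ih =>
    obtain ⟨h2, h1, -⟩ := ih (by omega)
    refine lamSeq_succ_spec hy (hfin m (by omega)) h2 h1 ?_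
    rw [hist.2.2 m hm (by omega)]
    exact hx m hm (by omega)

lemma hasHistory_of_eqOn (hn : 1 ≤ n) (hx : ∀ m, 1 ≤ m → m < n → qcell (m + 1) (x m) = 0)
    (hist : HasHistory x n y) (hfin : StagesFinite y n) (hag : ∀ i < lamSeq y n, y' i = y i)
    (hc : qcell n (y' (lamSeq y n)) = 0) :
    HasHistory x n y' ∧ StagesFinite y' n ∧ lamSeq y' n = lamSeq y n := by
  obtain ⟨h2, -, hq⟩ := lamSeq_spec hy hx hist hfin hn le_rfl
  have hdet := lamSeq_eq_of_eqOn hfin hag (hc.trans hq.symm)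
  refine ⟨⟨(hag 0 (by omega)).trans hist.1, (hag 1 (by omega)).trans hist.2.1,
    fun m hm1 hmn => ?_⟩, (hdet n le_rfl).2, (hdet n le_rfl).1⟩
  rw [(hdet m hmn.le).1, hag _ (lamSeq_lt_lamSeq hfin hmn le_rfl)]
  exact hist.2.2 m hm1 hmn

end Structure

end Sequence

lemma setOf_shift_eq_matchShifts {Ω : Type*} (X : ℤ → Ω → ℝ) (ω : Ω) (ℓ k : ℕ) :
    {t : ℕ | 0 < t ∧ ∀ i : ℕ, i ≤ ℓ →
      qcell k (X ((t : ℤ) + (i : ℤ)) ω) = qcell k (X (i : ℤ) ω)} =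
      matchShifts (fun i : ℕ => X i ω) ℓ k := by
  simp only [matchShifts, Nat.cast_add]

lemma lam_eq_lamSeq {Ω : Type*} (X : ℤ → Ω → ℝ) (ω : Ω) :
    ∀ n, lam X n ω = lamSeq (fun i : ℕ => X i ω) n
  | 0 => rfl
  | n + 1 => by
    simp only [lam, lamSeq, setOf_shift_eq_matchShifts, lam_eq_lamSeq X ω n]

lemma ae_stagesFinite_of_lamFinite {Ω : Type*} [MeasurableSpace Ω] {μ : Measure Ω}
    {X : ℤ → Ω → ℝ} (h : LamFinite μ X) :
    ∀ᵐ ω ∂μ, ∀ n, StagesFinite (fun i : ℕ => X i ω) n :=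
  h.mono fun ω hω _ m _ => by simpa only [setOf_shift_eq_matchShifts, lam_eq_lamSeq] using hω m

lemma K_one_pos {k : ℕ} (hk : k ≠ 1) : 0 < K 1 k := by
  obtain rfl | hk2 : k = 0 ∨ 2 ≤ k := by omega
  · norm_num [K]
  · simp only [K, one_ne_zero, if_false, if_true, if_neg (show k ≠ 0 by omega), if_pos hk2]
    positivity

section Paths

variable {Ω : Type*} {M : ℤ → Ω → ℕ}

def pathCylinder (M : ℤ → Ω → ℕ) (l : List ℕ) : Set Ω :=
  {ω | ∀ i < l.length, M i ω = l.getD i 0}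

def followedBy (M : ℤ → Ω → ℕ) (L : Set (List ℕ)) (S : Set ℕ) : Set Ω :=
  ⋃ l ∈ L, pathCylinder M l ∩ {ω | M l.length ω ∈ S}

lemma pathCylinder_append (l : List ℕ) (k : ℕ) :
    pathCylinder M (l ++ [k]) = pathCylinder M l ∩ {ω | M l.length ω = k} := by
  ext ω
  simp only [pathCylinder, Set.mem_ofPred_eq, Set.mem_inter_iff, List.length_append,
    List.length_singleton, Nat.lt_succ_iff_lt_or_eq, or_imp, forall_and, forall_eq]
  refine and_congr (forall₂_congr fun i hi => ?_) ?_
  · rw [List.getD_append _ _ _ _ hi]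
  · simp

lemma eq_of_mem_pathCylinder {l l' : List ℕ} {ω : Ω} (h : ω ∈ pathCylinder M l)
    (h' : ω ∈ pathCylinder M l') (hlen : l.length = l'.length) : l = l' :=
  List.ext_getElem hlen fun i h₁ h₂ => by
    rw [← List.getD_eq_getElem _ 0, ← List.getD_eq_getElem _ 0, ← h i h₁, ← h' i h₂]

lemma mem_pathCylinder_ofFn {L : ℕ} {v : ℕ → ℕ} {ω : Ω} :
    ω ∈ pathCylinder M (List.ofFn fun i : Fin L => v i) ↔ ∀ i < L, M i ω = v i := by
  simp only [pathCylinder, Set.mem_ofPred_eq, List.length_ofFn]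
  exact forall₂_congr fun i hi => by rw [List.getD_eq_getElem _ _ (by simpa), List.getElem_ofFn]

/-- The path `i ↦ X_i(ω) = h(M_i(ω))`, `i ≥ 0`. -/
def valuePath (M : ℤ → Ω → ℕ) (ω : Ω) : ℕ → ℝ := hmap ∘ fun i : ℕ => M i ω

/-- The words `M_0^{λ_n - 1}` of the paths in the conditioning event. -/
def historyPrefixes (x : ℕ → ℝ) (n : ℕ) : Set (List ℕ) :=
  {l | ∃ v : ℕ → ℕ, HasHistory x n (hmap ∘ v) ∧ StagesFinite (hmap ∘ v) n ∧
    l = List.ofFn fun i : Fin (lamSeq (hmap ∘ v) n) => v i}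

section History

variable {x : ℕ → ℝ} {n : ℕ} (hn : 1 ≤ n) (hx : ∀ m, 1 ≤ m → m < n → x m ∈ A m)
include hn hx

lemma getLast?_of_mem_historyPrefixes : ∀ l ∈ historyPrefixes x n, l.getLast? = some 1 := by
  rintro l hl
  obtain ⟨v, hist, hfin, rfl⟩ := hl
  obtain ⟨h2, h1, -⟩ := lamSeq_spec (y := hmap ∘ v) (fun i => hmap_eq_one_or_lt_half (v i))
    (fun m h1 h2 => qcell_succ_eq_zero_of_mem_A (hx m h1 h2)) hist hfin hn le_rfl
  rw [List.getLast?_eq_getElem?, List.length_ofFn, List.getElem?_ofFn, dif_pos (by omega)]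
  exact congrArg some (hmap_eq_one_iff.1 h1)

lemma hasHistory_of_mem_pathCylinder {l : List ℕ} (hl : l ∈ historyPrefixes x n) {ω : Ω}
    (hω : ω ∈ pathCylinder M l) (hS : M l.length ω ∈ cellZero n) :
    HasHistory x n (valuePath M ω) ∧ StagesFinite (valuePath M ω) n ∧
      lamSeq (valuePath M ω) n = l.length := by
  obtain ⟨v, hist, hfin, rfl⟩ := hl
  rw [List.length_ofFn] at hS ⊢
  rw [mem_pathCylinder_ofFn] at hω
  exact hasHistory_of_eqOn (fun i => hmap_eq_one_or_lt_half (v i)) hn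
    (fun m h1 h2 => qcell_succ_eq_zero_of_mem_A (hx m h1 h2)) hist hfin
    (fun i hi => congrArg hmap (hω i hi)) hS

lemma mem_followedBy_of_hasHistory {ω : Ω} (hist : HasHistory x n (valuePath M ω))
    (hfin : StagesFinite (valuePath M ω) n) :
    ω ∈ followedBy M (historyPrefixes x n) (cellZero n) := by
  obtain ⟨-, -, hq⟩ := lamSeq_spec (y := valuePath M ω) (fun i => hmap_eq_one_or_lt_half (M i ω))
    (fun m h1 h2 => qcell_succ_eq_zero_of_mem_A (hx m h1 h2)) hist hfin hn le_rfl
  refine Set.mem_biUnion (x := List.ofFn fun i : Fin (lamSeq (valuePath M ω) n) => M i ω)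
    ⟨_, hist, hfin, rfl⟩ ⟨mem_pathCylinder_ofFn.2 fun _ _ => rfl, ?_⟩
  rw [List.length_ofFn]
  exact hq

lemma pairwiseDisjoint_historyPrefixes :
    (historyPrefixes x n).PairwiseDisjoint
      fun l => pathCylinder M l ∩ {ω | M l.length ω ∈ cellZero n} :=
  fun _ hl _ hl' hne => Set.disjoint_left.2 fun _ h h' =>
    hne (eq_of_mem_pathCylinder h.1 h'.1
      ((hasHistory_of_mem_pathCylinder hn hx hl h.1 h.2).2.2.symm.trans
        (hasHistory_of_mem_pathCylinder hn hx hl' h'.1 h'.2).2.2))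

lemma followedBy_historyPrefixes_inter {k : ℕ} (hk : k ∈ cellZero n) :
    followedBy M (historyPrefixes x n) (cellZero n) ∩
        {ω | valuePath M ω (lamSeq (valuePath M ω) n) = hmap k} =
      followedBy M (historyPrefixes x n) {k} := by
  ext ω
  simp only [followedBy, Set.mem_inter_iff, Set.mem_iUnion, Set.mem_ofPred_eq,
    Set.mem_singleton_iff, exists_prop]
  constructor
  · rintro ⟨⟨l, hl, hω, hS⟩, hhit⟩
    rw [(hasHistory_of_mem_pathCylinder hn hx hl hω hS).2.2] at hhit
    exact ⟨l, hl, hω, hmap_injective hhit⟩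
  · rintro ⟨l, hl, hω, rfl⟩
    refine ⟨⟨l, hl, hω, hk⟩, ?_⟩
    rw [(hasHistory_of_mem_pathCylinder hn hx hl hω hk).2.2]
    rfl

end History

variable [MeasurableSpace Ω] {μ : Measure Ω}

lemma measurableSet_pathCylinder (hM : ∀ n, Measurable (M n)) (l : List ℕ) :
    MeasurableSet (pathCylinder M l) := by
  simp only [pathCylinder, Set.ofPred_forall]
  exact MeasurableSet.iInter fun i => MeasurableSet.iInter fun _ =>
    hM i (measurableSet_singleton _)

lemma measurableSet_followedBy (hM : ∀ n, Measurable (M n)) (L : Set (List ℕ)) (S : Set ℕ) :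
    MeasurableSet (followedBy M L S) :=
  MeasurableSet.biUnion L.to_countable fun l _ =>
    (measurableSet_pathCylinder hM l).inter (hM _ (MeasurableSet.of_discrete))

lemma measure_pathCylinder_toReal (hM : IsCounterexampleChain μ M) {l : List ℕ} (hl : l ≠ []) :
    (μ (pathCylinder M l)).toReal =
      piDist (l.getD 0 0) *
        ∏ i ∈ Finset.range (l.length - 1), K (l.getD i 0) (l.getD (i + 1) 0) := by
  rw [← hM.2 0 (l.length - 1) fun i => l.getD i 0]
  have hpos : 0 < l.length := List.length_pos_iff.2 hl
  congr 2
  ext ω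
  simp only [pathCylinder, Set.mem_ofPred_eq, zero_add]
  exact forall_congr' fun i => imp_congr_left (by omega)

lemma cond_congr_ae {s s' : Set Ω} (h : s =ᵐ[μ] s') : μ[|s] = μ[|s'] := by
  rw [ProbabilityTheory.cond, ProbabilityTheory.cond, measure_congr h, Measure.restrict_congr_set h]

lemma historyEvent_ae_eq {x : ℕ → ℝ} {n : ℕ} (hn : 1 ≤ n)
    (hx : ∀ m, 1 ≤ m → m < n → x m ∈ A m) (hfin : ∀ᵐ ω ∂μ, StagesFinite (valuePath M ω) n) :
    {ω | HasHistory x n (valuePath M ω)} =ᵐ[μ]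
      followedBy M (historyPrefixes x n) (cellZero n) := by
  refine EventuallyLE.antisymm (hfin.mono fun ω hω hist => ?_) (Eventually.of_forall ?_)
  · exact mem_followedBy_of_hasHistory hn hx hist hω
  · intro ω hω
    obtain ⟨l, hl, hcyl, hS⟩ := Set.mem_iUnion₂.1 hω
    exact (hasHistory_of_mem_pathCylinder hn hx hl hcyl hS).1

variable [IsProbabilityMeasure μ]

lemma measure_pathCylinder_singleton (hM : IsCounterexampleChain μ M) (a : ℕ) :
    μ (pathCylinder M [a]) = ENNReal.ofReal (piDist a) := by
  rw [← ENNReal.ofReal_toReal (measure_ne_top μ _),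
    measure_pathCylinder_toReal hM (List.cons_ne_nil a [])]
  simp

lemma measure_pathCylinder_append (hM : IsCounterexampleChain μ M) {l : List ℕ} {a : ℕ}
    (hl : l.getLast? = some a) (k : ℕ) :
    μ (pathCylinder M (l ++ [k])) = μ (pathCylinder M l) * ENNReal.ofReal (K a k) := by
  obtain ⟨l₀, rfl⟩ := List.getLast?_eq_some_iff.1 hl
  rw [← ENNReal.ofReal_toReal (measure_ne_top μ (pathCylinder M _)),
    ← ENNReal.ofReal_toReal (measure_ne_top μ (pathCylinder M (l₀ ++ [a]))),
    ← ENNReal.ofReal_mul ENNReal.toReal_nonneg, measure_pathCylinder_toReal hM (by simp),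
    measure_pathCylinder_toReal hM (by simp)]
  have hlen : (l₀ ++ [a] ++ [k]).length - 1 = (l₀ ++ [a]).length - 1 + 1 := by simp
  rw [hlen, Finset.prod_range_succ, List.getD_append _ _ _ 0 (by simp), ← mul_assoc]
  congr 3
  · refine Finset.prod_congr rfl fun i hi => ?_
    simp only [Finset.mem_range] at hi
    rw [List.getD_append (l₀ ++ [a]) [k] 0 i (by omega),
      List.getD_append (l₀ ++ [a]) [k] 0 (i + 1) (by omega)]
  · simp
  · simp

section FollowedBy

variable {L : Set (List ℕ)} {S : Set ℕ}

lemma measure_followedBy (hM : IsCounterexampleChain μ M) (hL : ∀ l ∈ L, l.getLast? = some 1)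
    (hd : L.PairwiseDisjoint fun l => pathCylinder M l ∩ {ω | M l.length ω ∈ S}) :
    μ (followedBy M L S) =
      (∑' l : L, μ (pathCylinder M l)) * ∑' k : S, ENNReal.ofReal (K 1 k) := by
  have hpiece : ∀ l ∈ L, μ (pathCylinder M l ∩ {ω | M l.length ω ∈ S}) =
      μ (pathCylinder M l) * ∑' k : S, ENNReal.ofReal (K 1 k) := by
    intro l hl
    have hunion : pathCylinder M l ∩ {ω | M l.length ω ∈ S} =
        ⋃ k ∈ S, pathCylinder M (l ++ [k]) := by
      ext ω; simp [pathCylinder_append]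
    have hdisj : S.PairwiseDisjoint fun k => pathCylinder M (l ++ [k]) := fun k _ k' _ hne =>
      Set.disjoint_left.2 fun ω h h' => by
        simp only [pathCylinder_append, Set.mem_inter_iff, Set.mem_ofPred_eq] at h h'
        exact hne (h.2.symm.trans h'.2)
    rw [hunion, measure_biUnion S.to_countable hdisj fun k _ =>
      measurableSet_pathCylinder hM.1 _, ← ENNReal.tsum_mul_left]
    exact tsum_congr fun k => measure_pathCylinder_append hM (hL l hl) k
  rw [followedBy, measure_biUnion L.to_countable hd fun l _ =>
    (measurableSet_pathCylinder hM.1 l).inter (hM.1 _ MeasurableSet.of_discrete),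
    ← ENNReal.tsum_mul_right]
  exact tsum_congr fun l => hpiece l l.2

lemma measure_followedBy_singleton (hM : IsCounterexampleChain μ M)
    (hL : ∀ l ∈ L, l.getLast? = some 1)
    (hd : L.PairwiseDisjoint fun l => pathCylinder M l ∩ {ω | M l.length ω ∈ S})
    {k : ℕ} (hk : k ∈ S) :
    μ (followedBy M L {k}) = (∑' l : L, μ (pathCylinder M l)) * ENNReal.ofReal (K 1 k) := by
  have hdk : L.PairwiseDisjoint fun l => pathCylinder M l ∩ {ω | M l.length ω ∈ ({k} : Set ℕ)} :=
    hd.mono fun l => Set.inter_subset_inter_right _ fun ω h => by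
      simp only [Set.mem_ofPred_eq, Set.mem_singleton_iff] at h ⊢
      exact h ▸ hk
  rw [measure_followedBy hM hL hdk, tsum_singleton k fun k => ENNReal.ofReal (K 1 k)]

lemma cond_followedBy (hM : IsCounterexampleChain μ M) (hL : ∀ l ∈ L, l.getLast? = some 1)
    (hd : L.PairwiseDisjoint fun l => pathCylinder M l ∩ {ω | M l.length ω ∈ S})
    {k : ℕ} (hk : k ∈ S) {T : Set Ω} (hT : followedBy M L S ∩ T = followedBy M L {k})
    (h0 : μ (followedBy M L S) ≠ 0) :
    μ[T | followedBy M L S] = (∑' a : S, ENNReal.ofReal (K 1 a))⁻¹ * ENNReal.ofReal (K 1 k) := by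
  have htop := measure_ne_top μ (followedBy M L S)
  rw [cond_apply (measurableSet_followedBy hM.1 L S), hT, measure_followedBy_singleton hM hL hd hk]
  rw [measure_followedBy hM hL hd] at h0 htop ⊢
  obtain ⟨hQ0, hc0⟩ := mul_ne_zero_iff.1 h0
  have hQtop : ∑' l : L, μ (pathCylinder M l) ≠ ⊤ := fun h => htop (by rw [h, ENNReal.top_mul hc0])
  rw [← ENNReal.div_eq_inv_mul, ← ENNReal.div_eq_inv_mul, ENNReal.mul_div_mul_left _ _ hQ0 hQtop]

end FollowedBy

lemma measure_historyEvent_ne_zero (hM : IsCounterexampleChain μ M)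
    (hfin : ∀ᵐ ω ∂μ, ∀ n, StagesFinite (valuePath M ω) n) {x : ℕ → ℝ} {n : ℕ} (hn : 1 ≤ n)
    (hx : ∀ m, 1 ≤ m → m < n → x m ∈ A m) :
    μ {ω | HasHistory x n (valuePath M ω)} ≠ 0 := by
  induction n, hn using Nat.le_induction with
  | base =>
    have hset : {ω | HasHistory x 1 (valuePath M ω)} = pathCylinder M ([0] ++ [1]) := by
      ext ω
      simp [hasHistory_one, pathCylinder, valuePath, hmap_eq_zero_iff, hmap_eq_one_iff,
        Nat.le_one_iff_eq_zero_or_eq_one, or_imp, forall_and]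
    rw [hset, measure_pathCylinder_append hM rfl, measure_pathCylinder_singleton hM]
    norm_num [piDist, K]
  | succ n hn ih =>
    have hxn : ∀ m, 1 ≤ m → m < n → x m ∈ A m := fun m h1 h2 => hx m h1 (by omega)
    obtain ⟨a, ha, hxa⟩ := A_eq_image n ▸ hx n hn (by omega)
    have hae := historyEvent_ae_eq hn hxn (hfin.mono fun ω h => h n)
    have hsucc : {ω | HasHistory x (n + 1) (valuePath M ω)} =
        {ω | HasHistory x n (valuePath M ω)} ∩
          {ω | valuePath M ω (lamSeq (valuePath M ω) n) = hmap a} := by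
      ext ω
      simp only [hasHistory_succ hn, hxa, Set.mem_inter_iff, Set.mem_ofPred_eq]
    have hL := getLast?_of_mem_historyPrefixes hn hxn
    have hd := pairwiseDisjoint_historyPrefixes (M := M) hn hxn
    have hQ := ih hxn
    rw [measure_congr hae, measure_followedBy hM hL hd] at hQ
    have hinter := measure_congr (hae.inter
      (ae_eq_refl {ω | valuePath M ω (lamSeq (valuePath M ω) n) = hmap a}))
    rw [hsucc, hinter,
      followedBy_historyPrefixes_inter hn hxn (cellZero_succ_subset n ha),
      measure_followedBy_singleton hM hL hd (cellZero_succ_subset n ha)]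
    exact mul_ne_zero (left_ne_zero_of_mul hQ)
      (ENNReal.ofReal_pos.2 (K_one_pos fun h => one_notMem_cellZero _ (h ▸ ha))).ne'

lemma cond_hit_of_history (hM : IsCounterexampleChain μ M)
    (hfin : ∀ᵐ ω ∂μ, ∀ n, StagesFinite (valuePath M ω) n) {x : ℕ → ℝ} {n : ℕ} (hn : 1 ≤ n)
    (hx : ∀ m, 1 ≤ m → m < n → x m ∈ A m) {k : ℕ} (hk : k ∈ cellZero n) :
    μ[{ω | valuePath M ω (lamSeq (valuePath M ω) n) = hmap k} |
        {ω | HasHistory x n (valuePath M ω)}] =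
      (∑' a : cellZero n, ENNReal.ofReal (K 1 a))⁻¹ * ENNReal.ofReal (K 1 k) := by
  have hae := historyEvent_ae_eq hn hx (hfin.mono fun ω h => h n)
  rw [cond_congr_ae hae]
  exact cond_followedBy hM (getLast?_of_mem_historyPrefixes hn hx)
    (pairwiseDisjoint_historyPrefixes hn hx) hk (followedBy_historyPrefixes_inter hn hx hk)
    (by rw [← measure_congr hae]; exact measure_historyEvent_ne_zero hM hfin hn hx)

lemma cond_next_of_start_one (hM : IsCounterexampleChain μ M) {S : Set ℕ} (hS : 0 ∈ S) {k : ℕ}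
    (hk : k ∈ S) :
    μ[{ω | M 1 ω = k} | {ω | M 0 ω = 1 ∧ M 1 ω ∈ S}] =
      (∑' a : S, ENNReal.ofReal (K 1 a))⁻¹ * ENNReal.ofReal (K 1 k) := by
  have hU : ∀ S' : Set ℕ, {ω | M 0 ω = 1 ∧ M 1 ω ∈ S'} = followedBy M {[1]} S' := by
    intro S'; ext ω; simp [followedBy, pathCylinder]
  have hL : ∀ l ∈ ({[1]} : Set (List ℕ)), l.getLast? = some 1 := by simp
  have hd := Set.pairwiseDisjoint_singleton [1]
    fun l => pathCylinder M l ∩ {ω | M l.length ω ∈ S}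
  rw [hU]
  refine cond_followedBy hM hL hd hk ?_ ?_
  · rw [← hU, ← hU]
    ext ω
    simp only [Set.mem_inter_iff, Set.mem_ofPred_eq, Set.mem_singleton_iff]
    exact ⟨fun ⟨⟨h0, _⟩, h1⟩ => ⟨h0, h1⟩, fun ⟨h0, h1⟩ => ⟨⟨h0, h1 ▸ hk⟩, h1⟩⟩
  · rw [measure_followedBy hM hL hd, tsum_singleton [1] fun l => μ (pathCylinder M l),
      measure_pathCylinder_singleton hM]
    refine mul_ne_zero (by norm_num [piDist]) (ne_of_gt ?_)
    calc (0 : ENNReal) < ENNReal.ofReal (K 1 0) := ENNReal.ofReal_pos.2 (K_one_pos zero_ne_one)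
      _ ≤ _ := ENNReal.le_tsum (⟨0, hS⟩ : S)

end Paths

/-- For the counterexample process, if `x_i ∈ A_i` for `1 ≤ i ≤ j`,
then for every `j ≥ 1`,
`P( X_{λ_j} = x_j | X_0^1 = (0,1), X_{λ_m} = x_m for 1 ≤ m < j )
  = P( X_1 = x_j | X_0 = 1, X_1 ∈ A_{j-1} )`. -/
theorem stmt15 {Ω : Type*} [MeasurableSpace Ω] (μ : Measure Ω) [IsProbabilityMeasure μ]
    (M : ℤ → Ω → ℕ) (hM : IsCounterexampleChain μ M)
    (X : ℤ → Ω → ℝ) (hX : ∀ n ω, X n ω = hmap (M n ω))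
    (hfin : LamFinite μ X)
    (j : ℕ) (hj : 1 ≤ j) (x : ℕ → ℝ) (hx : ∀ i, 1 ≤ i → i ≤ j → x i ∈ A i) :
    (μ[|{ω | X 0 ω = 0 ∧ X 1 ω = 1 ∧
        ∀ m : ℕ, 1 ≤ m → m < j → X (lam X m ω : ℤ) ω = x m}])
      {ω | X (lam X j ω : ℤ) ω = x j} =
    (μ[|{ω | X 0 ω = 1 ∧ X 1 ω ∈ A (j - 1)}]) {ω | X 1 ω = x j} := by
  have hXM : ∀ ω, (fun i : ℕ => X i ω) = valuePath M ω := fun ω => funext fun i => hX i ω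
  have hfin' : ∀ᵐ ω ∂μ, ∀ n, StagesFinite (valuePath M ω) n := by
    simpa only [hXM] using ae_stagesFinite_of_lamFinite hfin
  obtain ⟨k, hk, hxk⟩ := A_eq_image j ▸ hx j hj le_rfl
  have hkj : k ∈ cellZero j := cellZero_succ_subset j hk
  have hB : {ω | X 0 ω = 0 ∧ X 1 ω = 1 ∧ ∀ m : ℕ, 1 ≤ m → m < j → X (lam X m ω : ℤ) ω = x m} =
      {ω | HasHistory x j (valuePath M ω)} := by
    ext ω
    simp only [lam_eq_lamSeq, hXM]
    simp [HasHistory, valuePath, hX]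
  have hT : {ω | X (lam X j ω : ℤ) ω = x j} =
      {ω | valuePath M ω (lamSeq (valuePath M ω) j) = hmap k} := by
    ext ω
    simp only [lam_eq_lamSeq, hXM]
    simp [valuePath, hX, hxk]
  have hD : {ω | X 0 ω = 1 ∧ X 1 ω ∈ A (j - 1)} = {ω | M 0 ω = 1 ∧ M 1 ω ∈ cellZero j} := by
    ext ω
    simp [hX, hmap_eq_one_iff, A_eq_image, Nat.sub_add_cancel hj, hmap_injective.mem_set_image]
  have hT' : {ω | X 1 ω = x j} = {ω | M 1 ω = k} := by
    ext ω
    simp [hX, ← hxk, hmap_injective.eq_iff]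
  rw [hB, hT, hD, hT', cond_hit_of_history hM hfin' hj (fun m h1 h2 => hx m h1 h2.le) hkj,
    cond_next_of_start_one hM (zero_mem_cellZero j) hkj]

end
end
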